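/- arXiv:1602.07084 — 7 statements merged into one kernel-verified Lean document; each statement's English description precedes it below -/
import Mathlib

section
/- Let Y be a real Banach space such that the map y* ↦ ‖y*‖ is twice continuously (Fréchet) differentiable on Y* ∖ {0}, and let Z be a real Banach space. Suppose A : Y → Y and B : Z → Y are bounded linear operators and (y₀, y₀*) ∈ Π(Y) satisfy |y*(A y)| + ‖B* y*‖ ≤ |y₀*(A y₀)| + ‖B* y₀*‖ for all (y, y*) ∈ Π(Y). Then for every h* in the unit sphere of Y*, lim_{t→0} ( ‖B* y₀* + t B* h*‖ + ‖B* y₀* − t B* h*‖ − 2‖B* y₀*‖ ) / t = 0. -/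
/-!
By Šmulyan's lemma, at every `x* ≠ 0` the derivative `N'(x*)` of the dual norm `N` is evaluation
at some `y ∈ Y` with `‖y‖ = 1` and `x* y = ‖x*‖`, and at `y₀*` it is evaluation at `y₀`.
Normalising `x*` and applying the maximality of `(y₀, y₀*)` gives
`|N'(x*) (x* ∘ A)| + ‖x* ∘ B‖ ≤ ‖x*‖ M` for all `x* ≠ 0`, with equality at `y₀*`, where `M` is
the maximal value. Along the line `x*ₜ = y₀* + t h*`, the convex function `t ↦ ‖x*ₜ ∘ B‖` is thus
dominated by `‖x*ₜ‖ M - |N'(x*ₜ) (x*ₜ ∘ A)|`, with equality at `t = 0`; both terms are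
differentiable in `t` because `N` is `C²`. So the symmetric second difference of `t ↦ ‖x*ₜ ∘ B‖`,
which is nonnegative, is bounded by those of two functions differentiable at `0`, which are `o(t)`.
-/
open Filter Topology NormedSpace Metric

lemma DifferentiableAt.tendsto_add_comp_neg_sub_div {φ : ℝ → ℝ} (h : DifferentiableAt ℝ φ 0) :
    Tendsto (fun t => (φ t + φ (-t) - 2 * φ 0) / t) (𝓝[≠] 0) (𝓝 0) := by
  obtain ⟨φ', hφ⟩ : ∃ φ', HasDerivAt φ φ' 0 := ⟨_, h.hasDerivAt⟩
  have hneg : HasDerivAt (fun t => φ (-t)) (-φ') 0 := by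
    simpa [Function.comp_def] using
      (show HasDerivAt φ φ' (-0) by rwa [neg_zero]).comp (0 : ℝ) (hasDerivAt_neg (0 : ℝ))
  have hsum : HasDerivAt (fun t => φ t + φ (-t)) 0 0 :=
    (hφ.add hneg).congr_deriv (add_neg_cancel φ')
  refine (hasDerivAt_iff_tendsto_slope.1 hsum).congr fun t => ?_
  simp only [slope_def_field, neg_zero, sub_zero]
  ring

lemma tendsto_add_comp_neg_sub_div_of_le {F a n : ℝ → ℝ} {M : ℝ}
    (hF : ∀ t, 2 * F 0 ≤ F t + F (-t)) (hle : ∀ᶠ t in 𝓝 0, |a t| + F t ≤ n t * M)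
    (h₀ : |a 0| + F 0 = n 0 * M) (ha : DifferentiableAt ℝ a 0) (hn : DifferentiableAt ℝ n 0) :
    Tendsto (fun t => (F t + F (-t) - 2 * F 0) / t) (𝓝[≠] 0) (𝓝 0) := by
  have hbound : Tendsto (fun t => |(n t + n (-t) - 2 * n 0) / t| * |M|
      + |(a t + a (-t) - 2 * a 0) / t|) (𝓝[≠] 0) (𝓝 0) := by
    simpa using (hn.tendsto_add_comp_neg_sub_div.abs.mul_const |M|).add
      ha.tendsto_add_comp_neg_sub_div.abs
  refine squeeze_zero_norm' ?_ hbound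
  have hle' : ∀ᶠ t in 𝓝 (0 : ℝ), |a (-t)| + F (-t) ≤ n (-t) * M :=
    (continuous_neg.tendsto' 0 0 neg_zero).eventually hle
  filter_upwards [nhdsWithin_le_nhds (hle.and hle')] with t ⟨ht, ht'⟩
  have hnum : F t + F (-t) - 2 * F 0 ≤
      |n t + n (-t) - 2 * n 0| * |M| + |a t + a (-t) - 2 * a 0| := by
    have hM := abs_mul (n t + n (-t) - 2 * n 0) M ▸ le_abs_self ((n t + n (-t) - 2 * n 0) * M)
    have ha₀ := abs_add_three (a t) (a (-t)) (2 * a 0 - (a t + a (-t)))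
    rw [add_sub_cancel, abs_sub_comm, abs_mul, abs_two] at ha₀
    linarith
  rw [Real.norm_eq_abs, abs_div, abs_of_nonneg (by linarith [hF t]), abs_div, abs_div,
    div_mul_eq_mul_div, ← add_div]
  gcongr

lemma two_mul_norm_le_norm_add_add_norm_sub {E : Type*} [SeminormedAddCommGroup E]
    [NormedSpace ℝ E] (u v : E) : 2 * ‖u‖ ≤ ‖u + v‖ + ‖u - v‖ :=
  calc 2 * ‖u‖ = ‖(u + v) + (u - v)‖ := by
        rw [add_add_sub_cancel, ← two_smul ℝ, norm_smul, Real.norm_two]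
    _ ≤ ‖u + v‖ + ‖u - v‖ := norm_add_le _ _

section Smulyan

variable {E : Type*} [NormedAddCommGroup E] [NormedSpace ℝ E] {x : StrongDual ℝ E}

lemma exists_norm_inclusionInDoubleDual_sub_fderiv_norm_le
    (hd : DifferentiableAt ℝ (‖·‖) x) {ε : ℝ} (hε : 0 < ε) :
    ∃ δ > 0, ∀ y : E, ‖y‖ ≤ 1 → ‖x‖ - x y ≤ δ →
      ‖inclusionInDoubleDual ℝ E y - fderiv ℝ (‖·‖) x‖ ≤ ε := by
  obtain ⟨r, hr, hball⟩ := Metric.eventually_nhds_iff.1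
    ((hasFDerivAt_iff_isLittleO_nhds_zero.1 hd.hasFDerivAt).def (half_pos hε))
  set d := fderiv ℝ (‖·‖) x
  refine ⟨ε * (r / 2) / 2, by positivity, fun y hy hxy => ?_⟩
  -- `‖x + v‖ ≥ (x + v) y` turns the first-order expansion of the norm into a one-sided bound.
  have hupper : ∀ v : StrongDual ℝ E, ‖v‖ ≤ r / 2 → v y - d v ≤ ε * (r / 2) := by
    intro v hv
    have hexp := (abs_le.1 (hball (show dist v 0 < r by rw [dist_zero_right]; linarith))).2
    have hxv : (x + v) y ≤ ‖x + v‖ :=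
      (le_abs_self _).trans ((x + v).le_of_opNorm_le le_rfl y |>.trans
        (mul_le_of_le_one_right (norm_nonneg _) hy))
    simp only [add_apply] at hxv
    nlinarith
  refine (ContinuousLinearMap.opNorm_bound_of_ball_bound (half_pos hr) (ε * (r / 2)) _
    fun v hv => ?_).trans (mul_div_cancel_right₀ ε (half_pos hr).ne').le
  rw [mem_closedBall_zero_iff] at hv
  have h₁ := hupper v hv
  have h₂ := hupper (-v) (by rwa [norm_neg])
  simp only [map_neg, neg_apply] at h₂
  rw [Real.norm_eq_abs, abs_le]
  simp only [sub_apply, dual_def]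
  constructor <;> linarith

lemma inclusionInDoubleDual_eq_fderiv_norm (hd : DifferentiableAt ℝ (‖·‖) x) {y : E}
    (hy : ‖y‖ ≤ 1) (hxy : x y = ‖x‖) :
    inclusionInDoubleDual ℝ E y = fderiv ℝ (‖·‖) x := by
  refine eq_of_forall_dist_le fun ε hε => ?_
  obtain ⟨δ, hδ, hest⟩ := exists_norm_inclusionInDoubleDual_sub_fderiv_norm_le hd hε
  rw [dist_eq_norm]
  exact hest y hy (by linarith)

lemma exists_inclusionInDoubleDual_eq_fderiv_norm [CompleteSpace E]
    (hd : DifferentiableAt ℝ (‖·‖) x) :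
    ∃ y : E, inclusionInDoubleDual ℝ E y = fderiv ℝ (‖·‖) x := by
  have hiso : Isometry (inclusionInDoubleDualLi ℝ (E := E)) := (inclusionInDoubleDualLi ℝ).isometry
  have hclosed := hiso.isClosedEmbedding.isClosed_range
  refine hclosed.closure_subset (Metric.mem_closure_iff.2 fun ε hε => ?_)
  obtain ⟨δ, hδ, hest⟩ := exists_norm_inclusionInDoubleDual_sub_fderiv_norm_le hd (half_pos hε)
  obtain ⟨y, hy, hxy⟩ : ∃ y : E, ‖y‖ ≤ 1 ∧ ‖x‖ - δ < x y := by
    obtain ⟨y, hy, hxy⟩ := x.exists_lt_apply_of_lt_opNorm (sub_lt_self ‖x‖ hδ)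
    rcases le_or_gt 0 (x y) with h | h
    · exact ⟨y, hy.le, by rwa [Real.norm_eq_abs, abs_of_nonneg h] at hxy⟩
    · refine ⟨-y, by rw [norm_neg]; exact hy.le, ?_⟩
      rwa [Real.norm_eq_abs, abs_of_neg h, ← map_neg] at hxy
  refine ⟨_, Set.mem_range_self y, ?_⟩
  rw [dist_comm, dist_eq_norm]
  exact (hest y hy (by linarith)).trans_lt (half_lt_self hε)

/-- Šmulyan's lemma. -/
lemma exists_norm_eq_one_apply_eq_norm_of_differentiableAt_norm [CompleteSpace E]
    (hd : DifferentiableAt ℝ (‖·‖) x) (hx : x ≠ 0) :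
    ∃ y : E, ‖y‖ = 1 ∧ x y = ‖x‖ ∧ inclusionInDoubleDual ℝ E y = fderiv ℝ (‖·‖) x := by
  have : Nontrivial (StrongDual ℝ E) := nontrivial_of_ne x 0 hx
  obtain ⟨y, hy⟩ := exists_inclusionInDoubleDual_eq_fderiv_norm hd
  refine ⟨y, ?_, ?_, hy⟩
  · rw [← (inclusionInDoubleDualLi ℝ).norm_map y]
    exact (congrArg norm hy).trans (norm_fderiv_norm hd)
  · rw [← dual_def ℝ E y x, hy, hd.fderiv_norm_self]

end Smulyan

lemma abs_fderiv_norm_apply_comp_add_norm_comp_le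
    {Y : Type*} [NormedAddCommGroup Y] [NormedSpace ℝ Y] [CompleteSpace Y]
    {Z : Type*} [NormedAddCommGroup Z] [NormedSpace ℝ Z]
    {A : Y →L[ℝ] Y} {B : Z →L[ℝ] Y} {M : ℝ}
    (hmax : ∀ (y : Y) (ystar : StrongDual ℝ Y), ‖y‖ = 1 → ‖ystar‖ = 1 → ystar y = 1 →
      |ystar (A y)| + ‖ystar ∘L B‖ ≤ M)
    {x : StrongDual ℝ Y} (hd : DifferentiableAt ℝ (‖·‖) x) (hx : x ≠ 0) :
    |fderiv ℝ (‖·‖) x (x ∘L A)| + ‖x ∘L B‖ ≤ ‖x‖ * M := by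
  obtain ⟨y, hy, hxy, hJy⟩ := exists_norm_eq_one_apply_eq_norm_of_differentiableAt_norm hd hx
  have hxpos : 0 < ‖x‖ := norm_pos_iff.2 hx
  have hu := hmax y (‖x‖⁻¹ • x) hy (norm_smul_inv_norm hx)
    (by rw [smul_apply, hxy, smul_eq_mul, inv_mul_cancel₀ hxpos.ne'])
  rw [smul_apply, ContinuousLinearMap.smul_comp, norm_smul, smul_eq_mul,
    abs_mul, Real.norm_eq_abs, abs_inv, abs_norm, ← mul_add, inv_mul_le_iff₀ hxpos] at hu
  rwa [← hJy, dual_def]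

theorem lemma_on_Y_general
    {Y : Type*} [NormedAddCommGroup Y] [NormedSpace ℝ Y] [CompleteSpace Y]
    {Z : Type*} [NormedAddCommGroup Z] [NormedSpace ℝ Z]
    (hsmooth : ContDiffOn ℝ 2 (fun f : Y →L[ℝ] ℝ => ‖f‖) {0}ᶜ)
    (A : Y →L[ℝ] Y) (B : Z →L[ℝ] Y)
    (y₀ : Y) (y₀star : Y →L[ℝ] ℝ) (hy₀ : ‖y₀‖ = 1) (hy₀star : ‖y₀star‖ = 1)
    (hy₀pair : y₀star y₀ = 1)
    (hmax : ∀ (y : Y) (ystar : Y →L[ℝ] ℝ), ‖y‖ = 1 → ‖ystar‖ = 1 → ystar y = 1 →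
      |ystar (A y)| + ‖ystar ∘L B‖ ≤ |y₀star (A y₀)| + ‖y₀star ∘L B‖) :
    ∀ hstar : Y →L[ℝ] ℝ, ‖hstar‖ = 1 →
      Tendsto
        (fun t : ℝ =>
          (‖y₀star ∘L B + t • (hstar ∘L B)‖ + ‖y₀star ∘L B - t • (hstar ∘L B)‖
            - 2 * ‖y₀star ∘L B‖) / t)
        (𝓝[≠] (0 : ℝ)) (𝓝 0) := by
  intro hstar hhs
  set g := y₀star ∘L B
  set f := hstar ∘L B
  have hy₀ne : y₀star ≠ 0 := norm_ne_zero_iff.1 (hy₀star ▸ one_ne_zero)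
  have hC2 : ∀ x : Y →L[ℝ] ℝ, x ≠ 0 → ContDiffAt ℝ 2 (‖·‖) x := fun x hx =>
    hsmooth.contDiffAt (isOpen_compl_singleton.mem_nhds hx)
  have hd : ∀ x : Y →L[ℝ] ℝ, x ≠ 0 → DifferentiableAt ℝ (‖·‖) x := fun x hx =>
    (hC2 x hx).differentiableAt two_ne_zero
  set c : ℝ → (Y →L[ℝ] ℝ) := fun t => y₀star + t • hstar with hc
  have hc₀ : c 0 = y₀star := by simp [hc]
  have hA₀ : fderiv ℝ (‖·‖) y₀star (y₀star ∘L A) = y₀star (A y₀) := by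
    rw [← inclusionInDoubleDual_eq_fderiv_norm (hd _ hy₀ne) hy₀.le (by rw [hy₀pair, hy₀star])]
    rfl
  have hneg : ∀ t : ℝ, g + (-t) • f = g - t • f := fun t => by
    rw [neg_smul (M := Z →L[ℝ] ℝ), sub_eq_add_neg]
  refine (tendsto_add_comp_neg_sub_div_of_le (F := fun t => ‖g + t • f‖)
    (a := fun t => fderiv ℝ (‖·‖) (c t) (c t ∘L A)) (n := fun t => ‖c t‖)
    (M := |y₀star (A y₀)| + ‖g‖) ?_ ?_ ?_ ?_ ?_).congr fun t => ?_
  · intro t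
    rw [zero_smul, add_zero, hneg]
    exact two_mul_norm_le_norm_add_add_norm_sub g (t • f)
  · filter_upwards [(show Continuous c by fun_prop).continuousAt.eventually_ne (hc₀ ▸ hy₀ne)]
      with t ht
    have hcB : c t ∘L B = g + t • f := by
      simp only [hc, g, f, ContinuousLinearMap.add_comp, ContinuousLinearMap.smul_comp]
    rw [← hcB]
    exact abs_fderiv_norm_apply_comp_add_norm_comp_le hmax (hd _ ht) ht
  · simp [hc₀, hA₀, hy₀star]
  · have hG : DifferentiableAt ℝ (fderiv ℝ (‖·‖)) (c 0) :=
      hc₀ ▸ ((hC2 _ hy₀ne).fderiv_right (m := 1) le_rfl).differentiableAt one_ne_zero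
    exact (hG.comp 0 (by fun_prop)).clm_apply (by fun_prop)
  · exact (hd _ (hc₀ ▸ hy₀ne)).comp (0 : ℝ) (by fun_prop)
  · rw [zero_smul, add_zero, hneg]

/-- If the dual norm of `Y` is `C²`-smooth away from the origin,
`A : Y → Y`, `B : Z → Y` are bounded linear operators, and `(y₀, y₀*) ∈ Π(Y)` satisfies
`|y*(A y)| + ‖B* y*‖ ≤ |y₀*(A y₀)| + ‖B* y₀*‖` for all `(y, y*) ∈ Π(Y)`, then for every
`h*` in the unit sphere of `Y*`, `lim_{t→0} (‖B* y₀* + t B* h*‖ + ‖B* y₀* − t B* h*‖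
 − 2 ‖B* y₀*‖)/t = 0`. -/
theorem lemma_on_Y
    {Y : Type*} [NormedAddCommGroup Y] [NormedSpace ℝ Y] [CompleteSpace Y]
    {Z : Type*} [NormedAddCommGroup Z] [NormedSpace ℝ Z] [CompleteSpace Z]
    (hsmooth : ContDiffOn ℝ 2 (fun f : Y →L[ℝ] ℝ => ‖f‖) {0}ᶜ)
    (A : Y →L[ℝ] Y) (B : Z →L[ℝ] Y)
    (y₀ : Y) (y₀star : Y →L[ℝ] ℝ) (hy₀ : ‖y₀‖ = 1) (hy₀star : ‖y₀star‖ = 1)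
    (hy₀pair : y₀star y₀ = 1)
    (hmax : ∀ (y : Y) (ystar : Y →L[ℝ] ℝ), ‖y‖ = 1 → ‖ystar‖ = 1 → ystar y = 1 →
      |ystar (A y)| + ‖ystar ∘L B‖ ≤ |y₀star (A y₀)| + ‖y₀star ∘L B‖) :
    ∀ hstar : Y →L[ℝ] ℝ, ‖hstar‖ = 1 →
      Tendsto
        (fun t : ℝ =>
          (‖y₀star ∘L B + t • (hstar ∘L B)‖ + ‖y₀star ∘L B - t • (hstar ∘L B)‖
            - 2 * ‖y₀star ∘L B‖) / t)
        (𝓝[≠] (0 : ℝ)) (𝓝 0) :=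
  lemma_on_Y_general hsmooth A B y₀ y₀star hy₀ hy₀star hy₀pair hmax
end

section
/- Let Z be a strongly flat real Banach space and let Y be a real Banach space. Suppose that B : Z → Y is a bounded linear operator and y₀* is in the unit sphere of Y* such that lim sup_{t→0⁺} ( ‖B* y₀* + t B* h*‖ + ‖B* y₀* − t B* h*‖ − 2‖B* y₀*‖ ) / t ≤ 0 for every h* in the unit sphere of Y*, and that the functional B* y₀* ∈ Z* attains its norm on Z (there is z₀ in the unit ball of Z with |(B* y₀*)(z₀)| = ‖B* y₀*‖). Then B has finite rank, i.e. the range of B is a finite-dimensional subspace of Y. -/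
open Filter Topology

/-- The set of directions of flatness of `Z` at `z₀`. -/
def FlatDirections {Z : Type*} [NormedAddCommGroup Z] (z₀ : Z) : Set Z :=
  {z : Z | ‖z₀ + z‖ ≤ 1 ∧ ‖z₀ - z‖ ≤ 1}

/-- A Banach space `Z` is strongly flat if for every `z₀` in its unit sphere, the
quotient of `Z` by the closed linear span of the directions of flatness at `z₀` is
finite-dimensional. -/
def StronglyFlat (Z : Type*) [NormedAddCommGroup Z] [NormedSpace ℝ Z] : Prop :=
  ∀ z₀ : Z, ‖z₀‖ = 1 →
    FiniteDimensional ℝ (Z ⧸ (Submodule.span ℝ (FlatDirections z₀)).topologicalClosure)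

/-! Write `f = B* y₀*` and pick `z₁` in the unit ball with `f z₁ = ‖f‖`. For a flat direction
`z` at `z₁` and a unit functional `g` on `Y`, evaluating `f ± t • B* g` at `z₁ ± z` gives
`‖f + t • B* g‖ + ‖f - t • B* g‖ - 2‖f‖ ≥ 2 t g (B z)`, so the limsup hypothesis forces
`g (B z) ≤ 0`; hence `B` vanishes on the flat directions at `z₁`. If `‖z₁‖ = 1`, strong flatness
makes `B` factor through a finite-dimensional quotient; if `‖z₁‖ < 1`, the flat directions
contain a ball and `B = 0`. -/

noncomputable def normSymmDiffQuotient {E : Type*} [SeminormedAddCommGroup E] [NormedSpace ℝ E]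
    (x h : E) (t : ℝ) : ℝ :=
  (‖x + t • h‖ + ‖x - t • h‖ - 2 * ‖x‖) / t

section NormSymmDiffQuotient

variable {E : Type*} [SeminormedAddCommGroup E] [NormedSpace ℝ E]

lemma normSymmDiffQuotient_le (x h : E) {t : ℝ} (ht : 0 < t) :
    normSymmDiffQuotient x h t ≤ 2 * ‖h‖ := by
  have hth : ‖t • h‖ = t * ‖h‖ := by rw [norm_smul, Real.norm_of_nonneg ht.le]
  rw [normSymmDiffQuotient, div_le_iff₀ ht]
  linarith [norm_add_le x (t • h), norm_sub_le x (t • h)]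

lemma nonpos_of_forall_le_normSymmDiffQuotient {x h : E} {c : ℝ}
    (hlim : limsup (normSymmDiffQuotient x h) (𝓝[>] 0) ≤ 0)
    (hc : ∀ t, 0 < t → c ≤ normSymmDiffQuotient x h t) : c ≤ 0 := by
  refine le_trans (le_limsup_of_frequently_le ?_ ?_) hlim
  · exact Eventually.frequently (eventually_nhdsWithin_of_forall hc)
  · exact isBoundedUnder_of_eventually_le
      (eventually_nhdsWithin_of_forall fun t ht => normSymmDiffQuotient_le x h ht)

end NormSymmDiffQuotient

section Flat

variable {Z : Type*} [NormedAddCommGroup Z] [NormedSpace ℝ Z]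

lemma apply_le_norm_of_norm_le_one (f : Z →L[ℝ] ℝ) {z : Z} (hz : ‖z‖ ≤ 1) : f z ≤ ‖f‖ :=
  (le_abs_self _).trans (f.unit_le_opNorm z hz)

lemma two_mul_apply_le_normSymmDiffQuotient {f : Z →L[ℝ] ℝ} {z₁ z : Z}
    (hf : f z₁ = ‖f‖) (hz : z ∈ FlatDirections z₁) (h : Z →L[ℝ] ℝ) {t : ℝ} (ht : 0 < t) :
    2 * h z ≤ normSymmDiffQuotient f h t := by
  have hplus := apply_le_norm_of_norm_le_one (f + t • h) hz.1
  have hminus := apply_le_norm_of_norm_le_one (f - t • h) hz.2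
  simp only [add_apply, sub_apply, smul_apply, map_add, map_sub, smul_eq_mul, hf] at hplus hminus
  rw [normSymmDiffQuotient, le_div_iff₀ ht]
  linarith

lemma span_flatDirections_eq_top {z₁ : Z} (hz₁ : ‖z₁‖ < 1) :
    Submodule.span ℝ (FlatDirections z₁) = ⊤ := by
  have hball : Metric.ball (0 : Z) (1 - ‖z₁‖) ⊆ FlatDirections z₁ := fun z hz => by
    rw [mem_ball_zero_iff] at hz
    exact ⟨by linarith [norm_add_le z₁ z], by linarith [norm_sub_le z₁ z]⟩
  refine Submodule.eq_top_of_nonempty_interior' _ ⟨0, interior_mono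
    (hball.trans Submodule.subset_span) ?_⟩
  rw [Metric.isOpen_ball.interior_eq]
  exact Metric.mem_ball_self (by linarith)

end Flat

lemma eq_zero_of_forall_dual_le_zero {Y : Type*} [NormedAddCommGroup Y] [NormedSpace ℝ Y]
    {y : Y} (hy : ∀ g : Y →L[ℝ] ℝ, ‖g‖ = 1 → g y ≤ 0) : y = 0 := by
  by_contra hy0
  obtain ⟨g, hg, hgy⟩ := exists_dual_vector ℝ y (norm_ne_zero_iff.mpr hy0)
  have : ‖y‖ ≤ 0 := by simpa [hgy] using hy g hg
  exact hy0 (norm_le_zero_iff.mp this)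

section Operator

variable {Z : Type*} [NormedAddCommGroup Z] [NormedSpace ℝ Z]
  {Y : Type*} [NormedAddCommGroup Y] [NormedSpace ℝ Y]

lemma map_eq_zero_of_mem_flatDirections (B : Z →L[ℝ] Y) {f : Z →L[ℝ] ℝ}
    (hlim : ∀ g : Y →L[ℝ] ℝ, ‖g‖ = 1 → limsup (normSymmDiffQuotient f (g ∘L B)) (𝓝[>] 0) ≤ 0)
    {z₁ z : Z} (hz₁ : f z₁ = ‖f‖) (hz : z ∈ FlatDirections z₁) :
    B z = 0 := by
  refine eq_zero_of_forall_dual_le_zero fun g hg => ?_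
  have := nonpos_of_forall_le_normSymmDiffQuotient (hlim g hg)
    fun t ht => two_mul_apply_le_normSymmDiffQuotient hz₁ hz (g ∘L B) ht
  simp only [ContinuousLinearMap.comp_apply] at this
  linarith

lemma finiteDimensional_range_of_map_eq_zero (B : Z →L[ℝ] Y) {S : Set Z}
    [FiniteDimensional ℝ (Z ⧸ (Submodule.span ℝ S).topologicalClosure)]
    (hB : ∀ z ∈ S, B z = 0) : FiniteDimensional ℝ (LinearMap.range (B : Z →ₗ[ℝ] Y)) := by
  have hle : (Submodule.span ℝ S).topologicalClosure ≤ LinearMap.ker (B : Z →ₗ[ℝ] Y) :=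
    Submodule.topologicalClosure_minimal _ (Submodule.span_le.mpr hB) B.isClosed_ker
  rw [← Submodule.range_liftQ _ _ hle]
  infer_instance

end Operator

theorem lemma_on_Z_general
    {Z : Type*} [NormedAddCommGroup Z] [NormedSpace ℝ Z]
    {Y : Type*} [NormedAddCommGroup Y] [NormedSpace ℝ Y]
    (hZ : StronglyFlat Z) (B : Z →L[ℝ] Y)
    (y₀star : Y →L[ℝ] ℝ)
    (hlim : ∀ hstar : Y →L[ℝ] ℝ, ‖hstar‖ = 1 →
      Filter.limsup
        (fun t : ℝ =>
          (‖y₀star ∘L B + t • (hstar ∘L B)‖ + ‖y₀star ∘L B - t • (hstar ∘L B)‖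
            - 2 * ‖y₀star ∘L B‖) / t)
        (𝓝[>] (0 : ℝ)) ≤ 0)
    (hattain : ∃ z₀ : Z, ‖z₀‖ ≤ 1 ∧ |(y₀star ∘L B) z₀| = ‖y₀star ∘L B‖) :
    FiniteDimensional ℝ (LinearMap.range (B : Z →ₗ[ℝ] Y)) := by
  obtain ⟨z₁, hz₁, hfz₁⟩ : ∃ z₁ : Z, ‖z₁‖ ≤ 1 ∧ (y₀star ∘L B) z₁ = ‖y₀star ∘L B‖ := by
    obtain ⟨z₀, hz₀, habs⟩ := hattain
    rcases (abs_eq (norm_nonneg _)).mp habs with h | h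
    · exact ⟨z₀, hz₀, h⟩
    · exact ⟨-z₀, by rwa [norm_neg], by rw [map_neg, h, neg_neg]⟩
  have hker : ∀ z ∈ FlatDirections z₁, B z = 0 := fun z hz =>
    map_eq_zero_of_mem_flatDirections B hlim hfz₁ hz
  have hcodim :
      FiniteDimensional ℝ (Z ⧸ (Submodule.span ℝ (FlatDirections z₁)).topologicalClosure) := by
    rcases hz₁.lt_or_eq with hlt | heq
    · rw [span_flatDirections_eq_top hlt, eq_top_iff.mpr (Submodule.le_topologicalClosure ⊤)]
      infer_instance
    · exact hZ z₁ heq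
  exact finiteDimensional_range_of_map_eq_zero B hker

/-- If `Z` is strongly flat, `B : Z → Y` is a bounded linear operator, and `y₀*` in the
unit sphere of `Y*` is such that
`limsup_{t→0⁺} (‖B* y₀* + t B* h*‖ + ‖B* y₀* − t B* h*‖ − 2‖B* y₀*‖)/t ≤ 0`
for all `h*` in the unit sphere of `Y*` and `B* y₀*` attains its norm on `Z`,
then `B` has finite rank. -/
theorem lemma_on_Z
    {Z : Type*} [NormedAddCommGroup Z] [NormedSpace ℝ Z] [CompleteSpace Z]
    {Y : Type*} [NormedAddCommGroup Y] [NormedSpace ℝ Y] [CompleteSpace Y]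
    (hZ : StronglyFlat Z) (B : Z →L[ℝ] Y)
    (y₀star : Y →L[ℝ] ℝ) (hy₀star : ‖y₀star‖ = 1)
    (hlim : ∀ hstar : Y →L[ℝ] ℝ, ‖hstar‖ = 1 →
      Filter.limsup
        (fun t : ℝ =>
          (‖y₀star ∘L B + t • (hstar ∘L B)‖ + ‖y₀star ∘L B - t • (hstar ∘L B)‖
            - 2 * ‖y₀star ∘L B‖) / t)
        (𝓝[>] (0 : ℝ)) ≤ 0)
    (hattain : ∃ z₀ : Z, ‖z₀‖ ≤ 1 ∧ |(y₀star ∘L B) z₀| = ‖y₀star ∘L B‖) :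
    FiniteDimensional ℝ (LinearMap.range (B : Z →ₗ[ℝ] Y)) :=
  lemma_on_Z_general hZ B y₀star hlim hattain
end

section
/- Let Z and Y be real Banach spaces, B : Z → Y a bounded linear operator, and y₀* in the unit sphere of Y* such that lim sup_{t→0⁺} ( ‖B* y₀* + t B* h*‖ + ‖B* y₀* − t B* h*‖ − 2‖B* y₀*‖ ) / t ≤ 0 for every h* in the unit sphere of Y*. Suppose z₀ is in the unit sphere of Z with (B* y₀*)(z₀) = ‖B* y₀*‖. Then B z = 0 for every z ∈ Z with ‖z₀ + z‖ ≤ 1 and ‖z₀ − z‖ ≤ 1. -/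
open Filter Topology

/-!
Let `F = B* y₀*` and take `g` in the unit sphere of `Y*` with `g (B z) = ‖B z‖`. Evaluating
`F + t (g ∘ B)` at `z₀ + z` and `F - t (g ∘ B)` at `z₀ - z`, both of norm at most one, gives
`‖F + t (g ∘ B)‖ + ‖F - t (g ∘ B)‖ - 2‖F‖ ≥ 2 t ‖B z‖` for every `t > 0`, so the limsup in the
hypothesis is at least `2 ‖B z‖`, which forces `B z = 0`.
-/

section

variable {E : Type*} [SeminormedAddCommGroup E] [NormedSpace ℝ E]

theorem ContinuousLinearMap.two_mul_apply_add_apply_le_norm_add_add_norm_sub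
    (F G : StrongDual ℝ E) {x z : E} (h₁ : ‖x + z‖ ≤ 1) (h₂ : ‖x - z‖ ≤ 1) :
    2 * (F x + G z) ≤ ‖F + G‖ + ‖F - G‖ := by
  have hle : ∀ (f : StrongDual ℝ E) {v : E}, ‖v‖ ≤ 1 → f v ≤ ‖f‖ := fun f v hv => by
    simpa using (le_abs_self _).trans (f.le_opNorm_of_le hv)
  calc 2 * (F x + G z) = (F + G) (x + z) + (F - G) (x - z) := by simp; ring
    _ ≤ ‖F + G‖ + ‖F - G‖ := add_le_add (hle _ h₁) (hle _ h₂)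

theorem isBoundedUnder_le_norm_add_add_norm_sub_div (x h : E) :
    IsBoundedUnder (· ≤ ·) (𝓝[>] (0 : ℝ))
      (fun t : ℝ => (‖x + t • h‖ + ‖x - t • h‖ - 2 * ‖x‖) / t) := by
  refine isBoundedUnder_of_eventually_le (a := 2 * ‖h‖) ?_
  filter_upwards [self_mem_nhdsWithin] with t (ht : 0 < t)
  have hth : ‖t • h‖ = t * ‖h‖ := by rw [norm_smul, Real.norm_of_nonneg ht.le]
  rw [div_le_iff₀ ht]
  linarith [norm_add_le x (t • h), norm_sub_le x (t • h)]

theorem le_limsup_norm_add_add_norm_sub_div {x h : E} {c : ℝ}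
    (hc : ∀ t : ℝ, 0 < t → 2 * (t * c) ≤ ‖x + t • h‖ + ‖x - t • h‖ - 2 * ‖x‖) :
    2 * c ≤ limsup (fun t : ℝ => (‖x + t • h‖ + ‖x - t • h‖ - 2 * ‖x‖) / t) (𝓝[>] (0 : ℝ)) := by
  refine le_limsup_of_frequently_le (Eventually.frequently ?_)
    (isBoundedUnder_le_norm_add_add_norm_sub_div x h)
  filter_upwards [self_mem_nhdsWithin] with t (ht : 0 < t)
  rw [le_div_iff₀ ht]
  linarith [hc t ht]

end

theorem Bz_eq_zero_on_flat_directions_general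
    {Z : Type*} [NormedAddCommGroup Z] [NormedSpace ℝ Z]
    {Y : Type*} [NormedAddCommGroup Y] [NormedSpace ℝ Y]
    (B : Z →L[ℝ] Y)
    (y₀star : Y →L[ℝ] ℝ)
    (hlim : ∀ hstar : Y →L[ℝ] ℝ, ‖hstar‖ = 1 →
      Filter.limsup
        (fun t : ℝ =>
          (‖y₀star ∘L B + t • (hstar ∘L B)‖ + ‖y₀star ∘L B - t • (hstar ∘L B)‖
            - 2 * ‖y₀star ∘L B‖) / t)
        (𝓝[>] (0 : ℝ)) ≤ 0)
    (z₀ : Z) (hattain : (y₀star ∘L B) z₀ = ‖y₀star ∘L B‖) :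
    ∀ z : Z, ‖z₀ + z‖ ≤ 1 → ‖z₀ - z‖ ≤ 1 → B z = 0 := by
  intro z hz₁ hz₂
  by_contra hBz
  obtain ⟨g, hg_norm, hg_Bz⟩ := exists_dual_vector ℝ (B z) (norm_ne_zero_iff.mpr hBz)
  have hquot : ∀ t : ℝ, 0 < t → 2 * (t * ‖B z‖) ≤
      ‖y₀star ∘L B + t • (g ∘L B)‖ + ‖y₀star ∘L B - t • (g ∘L B)‖ - 2 * ‖y₀star ∘L B‖ := by
    intro t _
    have hpair := (y₀star ∘L B).two_mul_apply_add_apply_le_norm_add_add_norm_sub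
      (t • (g ∘L B)) hz₁ hz₂
    rw [hattain] at hpair
    simp only [FunLike.coe_smul, Pi.smul_apply, ContinuousLinearMap.comp_apply, hg_Bz,
      RCLike.ofReal_real_eq_id, id_eq, smul_eq_mul] at hpair
    linarith
  have hBz_le := (le_limsup_norm_add_add_norm_sub_div hquot).trans (hlim g hg_norm)
  exact hBz (norm_le_zero_iff.mp (by linarith))

/-- Let `B : Z → Y` be a bounded linear operator and `y₀*` in the unit sphere of `Y*` with
`limsup_{t→0⁺} (‖B* y₀* + t B* h*‖ + ‖B* y₀* − t B* h*‖ − 2‖B* y₀*‖)/t ≤ 0` for every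
`h*` in the unit sphere of `Y*`. If `z₀` belongs to the unit sphere of `Z` and
`(B* y₀*)(z₀) = ‖B* y₀*‖`, then `B z = 0` for every direction of flatness `z` at `z₀`. -/
theorem Bz_eq_zero_on_flat_directions
    {Z : Type*} [NormedAddCommGroup Z] [NormedSpace ℝ Z] [CompleteSpace Z]
    {Y : Type*} [NormedAddCommGroup Y] [NormedSpace ℝ Y] [CompleteSpace Y]
    (B : Z →L[ℝ] Y)
    (y₀star : Y →L[ℝ] ℝ) (hy₀star : ‖y₀star‖ = 1)
    (hlim : ∀ hstar : Y →L[ℝ] ℝ, ‖hstar‖ = 1 →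
      Filter.limsup
        (fun t : ℝ =>
          (‖y₀star ∘L B + t • (hstar ∘L B)‖ + ‖y₀star ∘L B - t • (hstar ∘L B)‖
            - 2 * ‖y₀star ∘L B‖) / t)
        (𝓝[>] (0 : ℝ)) ≤ 0)
    (z₀ : Z) (hz₀ : ‖z₀‖ = 1) (hattain : (y₀star ∘L B) z₀ = ‖y₀star ∘L B‖) :
    ∀ z : Z, ‖z₀ + z‖ ≤ 1 → ‖z₀ - z‖ ≤ 1 → B z = 0 :=
  Bz_eq_zero_on_flat_directions_general B y₀star hlim z₀ hattain
end

section
/- Let Y and Z be real Banach spaces, let X = Y ⊕∞ Z, and let P_Y and P_Z be the canonical projections from X onto Y and Z respectively (viewed as operators on X). If a bounded linear operator T on X attains its numerical radius and v(P_Y T) > v(P_Z T), then P_Y T attains its numerical radius. -/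
open scoped ENNReal

/-- The numerical radius of a bounded linear operator `T` on a real Banach space `X`. -/
noncomputable def numRadius {X : Type*} [NormedAddCommGroup X] [NormedSpace ℝ X]
    (T : X →L[ℝ] X) : ℝ :=
  sSup {r : ℝ | ∃ (x : X) (f : X →L[ℝ] ℝ), ‖x‖ = 1 ∧ ‖f‖ = 1 ∧ f x = 1 ∧ r = |f (T x)|}

/-- `T` attains its numerical radius. -/
def AttainsNumRadius {X : Type*} [NormedAddCommGroup X] [NormedSpace ℝ X]
    (T : X →L[ℝ] X) : Prop :=
  ∃ (x : X) (f : X →L[ℝ] ℝ), ‖x‖ = 1 ∧ ‖f‖ = 1 ∧ f x = 1 ∧ |f (T x)| = numRadius T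

section Aux

variable {X : Type*} [NormedAddCommGroup X] [NormedSpace ℝ X]

lemma numRadius_bddAbove (T : X →L[ℝ] X) :
    BddAbove {r : ℝ | ∃ (x : X) (f : X →L[ℝ] ℝ), ‖x‖ = 1 ∧ ‖f‖ = 1 ∧ f x = 1 ∧ r = |f (T x)|} := by
  refine ⟨‖T‖, ?_⟩
  rintro r ⟨x, f, hx, hf, hfx, rfl⟩
  calc |f (T x)| ≤ ‖f‖ * ‖T x‖ := f.le_opNorm _
    _ ≤ 1 * (‖T‖ * ‖x‖) := by rw [hf]; gcongr; exact T.le_opNorm x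
    _ = ‖T‖ := by rw [hx]; ring

lemma abs_le_numRadius (T : X →L[ℝ] X) (x : X) (f : X →L[ℝ] ℝ)
    (hx : ‖x‖ = 1) (hf : ‖f‖ = 1) (hfx : f x = 1) : |f (T x)| ≤ numRadius T :=
  le_csSup (numRadius_bddAbove T) ⟨x, f, hx, hf, hfx, rfl⟩

/-- Key bound: if `f (P x) = ‖f ∘L P‖` at a normalized pair `(x, f)`, then
`|f (P (S x))| ≤ ‖f ∘L P‖ * numRadius S`. -/
lemma keyBound (P S : X →L[ℝ] X) (x : X) (f : X →L[ℝ] ℝ)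
    (hx : ‖x‖ = 1) (hgx : f (P x) = ‖f ∘L P‖) :
    |f (P (S x))| ≤ ‖f ∘L P‖ * numRadius S := by
  rcases eq_or_lt_of_le (norm_nonneg (f ∘L P)) with h0 | h0
  · have h1 : |f (P (S x))| ≤ ‖f ∘L P‖ * ‖S x‖ := (f ∘L P).le_opNorm (S x)
    rw [← h0] at h1 ⊢
    simpa using h1
  · have hc : ‖f ∘L P‖ ≠ 0 := ne_of_gt h0
    have hgnorm : ‖(‖f ∘L P‖⁻¹ • (f ∘L P) : X →L[ℝ] ℝ)‖ = 1 := by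
      have h1 := norm_smul (‖f ∘L P‖⁻¹) (f ∘L P)
      rw [norm_inv, Real.norm_eq_abs, abs_of_pos h0, inv_mul_cancel₀ hc] at h1
      exact h1
    have hgx1 : (‖f ∘L P‖⁻¹ • (f ∘L P) : X →L[ℝ] ℝ) x = 1 := by
      simp only [ContinuousLinearMap.smul_apply, ContinuousLinearMap.comp_apply, smul_eq_mul]
      rw [hgx, inv_mul_cancel₀ hc]
    have hle := abs_le_numRadius S x (‖f ∘L P‖⁻¹ • (f ∘L P)) hx hgnorm hgx1
    have hgS : (‖f ∘L P‖⁻¹ • (f ∘L P) : X →L[ℝ] ℝ) (S x) = ‖f ∘L P‖⁻¹ * f (P (S x)) := rfl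
    rw [hgS, abs_mul, abs_inv, abs_of_pos h0] at hle
    calc |f (P (S x))| = ‖f ∘L P‖ * (‖f ∘L P‖⁻¹ * |f (P (S x))|) := by field_simp
      _ ≤ ‖f ∘L P‖ * numRadius S := mul_le_mul_of_nonneg_left hle (le_of_lt h0)

lemma abstract_main (P Q T : X →L[ℝ] X)
    (hsum : ∀ u, P u + Q u = u)
    (hPP : ∀ u, P (P u) = P u)
    (hQQ : ∀ u, Q (Q u) = Q u)
    (hnorm : ∀ u w, ‖P u + Q w‖ ≤ max ‖u‖ ‖w‖)
    (hT : AttainsNumRadius T)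
    (hv : numRadius (Q ∘L T) < numRadius (P ∘L T)) :
    AttainsNumRadius (P ∘L T) := by
  -- Step A: for any norm-one functional, ‖f ∘L P‖ + ‖f ∘L Q‖ ≤ 1
  have stepA : ∀ f : X →L[ℝ] ℝ, ‖f‖ = 1 → ‖f ∘L P‖ + ‖f ∘L Q‖ ≤ 1 := by
    intro f hf
    refine le_of_forall_pos_le_add ?_
    intro ε hε
    -- find u with ‖u‖ ≤ 1 and ‖f ∘L P‖ - ε/2 < f (P u)
    have hfind : ∀ R : X →L[ℝ] ℝ, ∃ u : X, ‖u‖ ≤ 1 ∧ ‖R‖ - ε / 2 < R u := by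
      intro R
      have hr : ‖R‖ - ε / 2 < ‖R‖ := by linarith
      obtain ⟨u, hu1, hu2⟩ := R.exists_lt_apply_of_lt_opNorm hr
      rcases le_or_gt 0 (R u) with h | h
      · exact ⟨u, le_of_lt hu1, by rwa [Real.norm_eq_abs, abs_of_nonneg h] at hu2⟩
      · refine ⟨-u, by simpa using le_of_lt hu1, ?_⟩
        rw [map_neg]
        rwa [Real.norm_eq_abs, abs_of_neg h] at hu2
    obtain ⟨u, hu1, hu2⟩ := hfind (f ∘L P)
    obtain ⟨w, hw1, hw2⟩ := hfind (f ∘L Q)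
    have hv1 : ‖P u + Q w‖ ≤ 1 := le_trans (hnorm u w) (max_le hu1 hw1)
    have hfv : f (P u + Q w) ≤ 1 := by
      calc f (P u + Q w) ≤ |f (P u + Q w)| := le_abs_self _
        _ ≤ ‖f‖ * ‖P u + Q w‖ := f.le_opNorm _
        _ ≤ 1 := by rw [hf]; simpa using hv1
    have : f (P u) + f (Q w) ≤ 1 := by rw [← map_add]; exact hfv
    have hPu : (f ∘L P) u = f (P u) := rfl
    have hQw : (f ∘L Q) w = f (Q w) := rfl
    rw [hPu] at hu2; rw [hQw] at hw2
    linarith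
  -- Step B: at any normalized pair, f (P x) = ‖f ∘L P‖ and f (Q x) = ‖f ∘L Q‖
  have stepB : ∀ (x : X) (f : X →L[ℝ] ℝ), ‖x‖ = 1 → ‖f‖ = 1 → f x = 1 →
      f (P x) = ‖f ∘L P‖ ∧ f (Q x) = ‖f ∘L Q‖ := by
    intro x f hx hf hfx
    have h1 : f (P x) + f (Q x) = 1 := by rw [← map_add, hsum x, hfx]
    have h2 : f (P x) ≤ ‖f ∘L P‖ := by
      calc f (P x) ≤ |f (P x)| := le_abs_self _
        _ = |(f ∘L P) x| := rfl
        _ ≤ ‖f ∘L P‖ * ‖x‖ := (f ∘L P).le_opNorm x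
        _ = ‖f ∘L P‖ := by rw [hx, mul_one]
    have h3 : f (Q x) ≤ ‖f ∘L Q‖ := by
      calc f (Q x) ≤ |f (Q x)| := le_abs_self _
        _ = |(f ∘L Q) x| := rfl
        _ ≤ ‖f ∘L Q‖ * ‖x‖ := (f ∘L Q).le_opNorm x
        _ = ‖f ∘L Q‖ := by rw [hx, mul_one]
    have h4 := stepA f hf
    constructor <;> linarith
  obtain ⟨x, f, hx, hf, hfx, hattain⟩ := hT
  have hT0 : 0 ≤ numRadius T := le_trans (abs_nonneg _) (abs_le_numRadius T x f hx hf hfx)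
  -- Step E : numRadius (P ∘L T) ≤ numRadius T
  have stepE : numRadius (P ∘L T) ≤ numRadius T := by
    refine Real.sSup_le ?_ hT0
    rintro r ⟨x', f', hx', hf', hfx', rfl⟩
    obtain ⟨hBP, _⟩ := stepB x' f' hx' hf' hfx'
    have hkey := keyBound P T x' f' hx' hBP
    have hc1 : ‖f' ∘L P‖ ≤ 1 := by
      have := stepA f' hf'
      have := norm_nonneg (f' ∘L Q)
      linarith
    have : |f' ((P ∘L T) x')| = |f' (P (T x'))| := rfl
    rw [this]
    calc |f' (P (T x'))| ≤ ‖f' ∘L P‖ * numRadius T := hkey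
      _ ≤ 1 * numRadius T := mul_le_mul_of_nonneg_right hc1 hT0
      _ = numRadius T := one_mul _
  -- nonnegativity of numRadius (Q ∘L T)
  have hQT0 : 0 ≤ numRadius (Q ∘L T) :=
    le_trans (abs_nonneg _) (abs_le_numRadius (Q ∘L T) x f hx hf hfx)
  -- main estimate at the attaining pair
  obtain ⟨hBP, hBQ⟩ := stepB x f hx hf hfx
  set c : ℝ := ‖f ∘L P‖
  set d : ℝ := ‖f ∘L Q‖
  have hkeyP : |f (P (T x))| ≤ c * numRadius (P ∘L T) := by
    have := keyBound P (P ∘L T) x f hx hBP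
    have heq : f (P ((P ∘L T) x)) = f (P (T x)) := by
      simp only [ContinuousLinearMap.comp_apply]
      rw [hPP]
    rwa [heq] at this
  have hkeyQ : |f (Q (T x))| ≤ d * numRadius (Q ∘L T) := by
    have := keyBound Q (Q ∘L T) x f hx hBQ
    have heq : f (Q ((Q ∘L T) x)) = f (Q (T x)) := by
      simp only [ContinuousLinearMap.comp_apply]
      rw [hQQ]
    rwa [heq] at this
  have hsplit : f (T x) = f (P (T x)) + f (Q (T x)) := by rw [← map_add, hsum]
  have h1 : numRadius T ≤ c * numRadius (P ∘L T) + d * numRadius (Q ∘L T) := by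
    calc numRadius T = |f (T x)| := hattain.symm
      _ = |f (P (T x)) + f (Q (T x))| := by rw [← hsplit]
      _ ≤ |f (P (T x))| + |f (Q (T x))| := abs_add_le _ _
      _ ≤ c * numRadius (P ∘L T) + d * numRadius (Q ∘L T) := add_le_add hkeyP hkeyQ
  have hcd := stepA f hf
  have hc0 : 0 ≤ c := norm_nonneg _
  have hd0 : 0 ≤ d := norm_nonneg _
  -- deduce d = 0
  have hd : d = 0 := by
    nlinarith [stepE, h1, hv, hQT0]
  -- hence f (Q (T x)) = 0
  have hQ0 : f (Q (T x)) = 0 := by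
    have : |f (Q (T x))| ≤ d * ‖T x‖ := (f ∘L Q).le_opNorm (T x)
    rw [hd, zero_mul] at this
    exact abs_eq_zero.mp (le_antisymm this (abs_nonneg _))
  have hfPT : f ((P ∘L T) x) = f (T x) := by
    have : f ((P ∘L T) x) = f (P (T x)) := rfl
    rw [this, hsplit, hQ0, add_zero]
  refine ⟨x, f, hx, hf, hfx, ?_⟩
  have hle : |f ((P ∘L T) x)| ≤ numRadius (P ∘L T) :=
    abs_le_numRadius (P ∘L T) x f hx hf hfx
  have heq : |f ((P ∘L T) x)| = numRadius T := by rw [hfPT, hattain]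
  have : numRadius T ≤ numRadius (P ∘L T) := heq ▸ hle
  linarith [stepE, heq, hle]

end Aux

/-- For `X = Y ⊕∞ Z` and the canonical projections `P_Y`, `P_Z` from `X` onto `Y` and `Z`
(viewed as operators on `X`): if `T` attains its numerical radius and
`v(P_Y T) > v(P_Z T)`, then `P_Y T` attains its numerical radius. -/
theorem attainsNumRadius_PY_comp_of_prodLinfty
    {Y : Type*} [NormedAddCommGroup Y] [NormedSpace ℝ Y] [CompleteSpace Y]
    {Z : Type*} [NormedAddCommGroup Z] [NormedSpace ℝ Z] [CompleteSpace Z]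
    (PY PZ : WithLp ∞ (Y × Z) →L[ℝ] WithLp ∞ (Y × Z))
    (hPY : ∀ x : WithLp ∞ (Y × Z), PY x =
      (WithLp.prodContinuousLinearEquiv ∞ ℝ Y Z).symm
        (((WithLp.prodContinuousLinearEquiv ∞ ℝ Y Z) x).1, 0))
    (hPZ : ∀ x : WithLp ∞ (Y × Z), PZ x =
      (WithLp.prodContinuousLinearEquiv ∞ ℝ Y Z).symm
        (0, ((WithLp.prodContinuousLinearEquiv ∞ ℝ Y Z) x).2))
    (T : WithLp ∞ (Y × Z) →L[ℝ] WithLp ∞ (Y × Z))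
    (hT : AttainsNumRadius T)
    (hv : numRadius (PZ ∘L T) < numRadius (PY ∘L T)) :
    AttainsNumRadius (PY ∘L T) := by
  set e := WithLp.prodContinuousLinearEquiv ∞ ℝ Y Z with he
  have hnormsymm : ∀ (a : Y) (b : Z), ‖(e.symm (a, b) : WithLp ∞ (Y × Z))‖ = max ‖a‖ ‖b‖ := by
    intro a b
    rfl
  have hsum : ∀ u, PY u + PZ u = u := by
    intro u
    rw [hPY, hPZ, ← map_add, Prod.mk_add_mk, add_zero, zero_add, Prod.mk.eta,
      ContinuousLinearEquiv.symm_apply_apply]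
  have hPP : ∀ u, PY (PY u) = PY u := by
    intro u
    rw [hPY (PY u), hPY u, ContinuousLinearEquiv.apply_symm_apply]
  have hQQ : ∀ u, PZ (PZ u) = PZ u := by
    intro u
    rw [hPZ (PZ u), hPZ u, ContinuousLinearEquiv.apply_symm_apply]
  have hnorm : ∀ u w, ‖PY u + PZ w‖ ≤ max ‖u‖ ‖w‖ := by
    intro u w
    rw [hPY, hPZ, ← map_add, Prod.mk_add_mk, add_zero, zero_add, hnormsymm]
    have hu : ‖(e u).1‖ ≤ ‖u‖ := by
      have : ‖u‖ = max ‖(e u).1‖ ‖(e u).2‖ := by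
        conv_lhs => rw [← e.symm_apply_apply u]
        rw [show (e u) = ((e u).1, (e u).2) from rfl] at *
        exact hnormsymm (e u).1 (e u).2
      rw [this]; exact le_max_left _ _
    have hw : ‖(e w).2‖ ≤ ‖w‖ := by
      have : ‖w‖ = max ‖(e w).1‖ ‖(e w).2‖ := by
        conv_lhs => rw [← e.symm_apply_apply w]
        exact hnormsymm (e w).1 (e w).2
      rw [this]; exact le_max_right _ _
    exact max_le_max hu hw
  exact abstract_main PY PZ T hsum hPP hQQ hnorm hT hv
end

section
/- Let Y be a real Banach space such that the map y* ↦ ‖y*‖ is twice continuously (Fréchet) differentiable on Y* ∖ {0}, and let Z be a strongly flat real Banach space. Let X = Y ⊕∞ Z and, for bounded linear operators A : Y → Y and B : Z → Y, define the bounded linear operator T on X by T(y, z) = (A y + B z, 0). If T attains its numerical radius, then B has finite rank, i.e. the range of B is a finite-dimensional subspace of Y. -/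
open scoped ENNReal

/-!
A state of `Y ⊕∞ Z` is `((y, z), (g, h))` with `max ‖y‖ ‖z‖ = 1`, `‖g‖ + ‖h‖ = 1` and
`g y + h z = 1`, at which `T` takes the value `|g (A y + B z)|`. Let the numerical radius be
attained at `((y₀, z₀), (g, h))`. If `g = 0`, the radius is `0` and this forces `B = 0`.
Otherwise `g y₀ = ‖g‖`, `h z₀ = ‖h‖`, and for a flat direction `z` at `z₀` the points
`z₀ ± z` still give states, whence `g (B z) = 0`. Now tilt `g` in a direction `k` along a curve
`c t` of constant norm. Šmulyan's lemma (the dual norm is differentiable) provides norming points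
`y_t` of `c t`, and `c t (A y_t)` is the derivative of the norm at `c t` evaluated at `c t ∘ A`,
hence differentiable in `t` since the norm is `C²`. The values at `(y_t, z₀)` and `(y_t, z₀ + z)`
are maximal in absolute value at `t = 0`, so their derivatives vanish there; these differ by
`k (B z)`. Thus `B` kills the flat directions at `z₀`: these contain a ball if `‖z₀‖ < 1`, and
their closed span has finite codimension if `‖z₀‖ = 1`.
-/

open Filter Topology NormedSpace

section Functional

variable {E : Type*} [NormedAddCommGroup E] [NormedSpace ℝ E]

theorem ContinuousLinearMap.apply_le_norm_of_norm_le_one (f : StrongDual ℝ E) {x : E}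
    (hx : ‖x‖ ≤ 1) : f x ≤ ‖f‖ :=
  (le_abs_self _).trans (by simpa using f.le_opNorm_of_le hx)

theorem ContinuousLinearMap.exists_norm_lt_one_lt_apply (f : StrongDual ℝ E) {r : ℝ}
    (hr : r < ‖f‖) : ∃ x : E, ‖x‖ < 1 ∧ r < f x := by
  obtain ⟨x, hx, hfx⟩ := f.exists_lt_apply_of_lt_opNorm hr
  rcases le_total 0 (f x) with h | h
  · exact ⟨x, hx, by rwa [Real.norm_eq_abs, abs_of_nonneg h] at hfx⟩
  · exact ⟨-x, by rwa [norm_neg], by rwa [Real.norm_eq_abs, abs_of_nonpos h, ← map_neg] at hfx⟩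

theorem ContinuousLinearMap.norm_eq_one_of_apply_eq_norm {f : StrongDual ℝ E} (hf : f ≠ 0)
    {x : E} (hx : ‖x‖ ≤ 1) (hfx : f x = ‖f‖) : ‖x‖ = 1 := by
  refine le_antisymm hx (le_of_mul_le_mul_left ?_ (norm_pos_iff.2 hf))
  calc ‖f‖ * 1 = f x := by rw [mul_one, hfx]
    _ ≤ ‖f‖ * ‖x‖ := (le_abs_self _).trans (f.le_opNorm x)

end Functional

section DualNorm

variable {Y : Type*} [NormedAddCommGroup Y] [NormedSpace ℝ Y]

theorem HasFDerivAt.dual_norm_apply_eq {g : StrongDual ℝ Y} {D : StrongDual ℝ (StrongDual ℝ Y)}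
    (hd : HasFDerivAt (fun f : StrongDual ℝ Y => ‖f‖) D g) {y : Y} (hy : ‖y‖ ≤ 1)
    (hgy : g y = ‖g‖) (k : StrongDual ℝ Y) : D k = k y := by
  have hmin : IsLocalMin (fun t : ℝ => ‖g + t • k‖ - (g + t • k) y) 0 :=
    Eventually.of_forall fun t => by
      simpa [hgy] using (g + t • k).apply_le_norm_of_norm_le_one hy
  have hline : HasDerivAt (fun t : ℝ => g + t • k) k 0 := by
    simpa using ((hasDerivAt_id (0 : ℝ)).smul_const k).const_add g
  have hnorm : HasDerivAt (fun t : ℝ => ‖g + t • k‖) (D k) 0 :=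
    (by simpa using hd : HasFDerivAt _ D (g + (0 : ℝ) • k)).comp_hasDerivAt 0 hline
  have heval : HasDerivAt (fun t : ℝ => (g + t • k) y) (k y) 0 := by
    simpa using ((hasDerivAt_id (0 : ℝ)).mul_const (k y)).const_add (g y)
  exact sub_eq_zero.1 (hmin.hasDerivAt_eq_zero (hnorm.sub heval))

theorem HasFDerivAt.exists_norm_inclusionInDoubleDual_sub_le {φ : StrongDual ℝ Y}
    {ξ : StrongDual ℝ (StrongDual ℝ Y)} (hd : HasFDerivAt (fun f : StrongDual ℝ Y => ‖f‖) ξ φ)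
    {ε : ℝ} (hε : 0 < ε) :
    ∃ δ > 0, ∀ x : Y, ‖x‖ ≤ 1 → ‖φ‖ - δ ≤ φ x → ‖inclusionInDoubleDual ℝ Y x - ξ‖ ≤ ε := by
  obtain ⟨t, ht, hball⟩ := Metric.eventually_nhds_iff_ball.1
    ((hasFDerivAt_iff_isLittleO_nhds_zero.1 hd).def (half_pos hε))
  refine ⟨ε * t / 4, by positivity, fun x hx hφx => ?_⟩
  have hupper : ∀ k : StrongDual ℝ Y, t / 2 ≤ ‖k‖ → ‖k‖ < t → k x - ξ k ≤ ε * ‖k‖ := by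
    intro k hk₁ hk₂
    -- `(φ + k) x ≤ ‖φ + k‖ ≤ ‖φ‖ + ξ k + ε ‖k‖ / 2`, while `φ x ≥ ‖φ‖ - ε ‖k‖ / 2`
    have hk := (abs_le.1 (hball k (mem_ball_zero_iff.2 hk₂))).2
    have hφk := (φ + k).apply_le_norm_of_norm_le_one hx
    rw [add_apply] at hφk
    nlinarith
  refine ContinuousLinearMap.opNorm_le_of_shell (c := (2 : ℝ)) ht hε.le (by norm_num)
    fun k hk₁ hk₂ => ?_
  simp only [sub_apply, dual_def, Real.norm_eq_abs, abs_le]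
  norm_num at hk₁
  constructor
  · simpa using hupper (-k) (by rwa [norm_neg]) (by rwa [norm_neg])
  · exact hupper k hk₁ hk₂

theorem HasFDerivAt.exists_norm_eq_one_apply_eq_norm [CompleteSpace Y] {φ : StrongDual ℝ Y}
    {ξ : StrongDual ℝ (StrongDual ℝ Y)} (hd : HasFDerivAt (fun f : StrongDual ℝ Y => ‖f‖) ξ φ)
    (hφ : φ ≠ 0) : ∃ y : Y, ‖y‖ = 1 ∧ φ y = ‖φ‖ := by
  have hex (n : ℕ) : ∃ x : Y, ‖x‖ ≤ 1 ∧ ‖φ‖ ≤ φ x + 1 / (n + 1) ∧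
      ‖inclusionInDoubleDual ℝ Y x - ξ‖ ≤ 1 / (n + 1) := by
    have hn : (0 : ℝ) < 1 / (n + 1) := Nat.one_div_pos_of_nat
    obtain ⟨δ, hδ, hclose⟩ := hd.exists_norm_inclusionInDoubleDual_sub_le hn
    obtain ⟨x, hx, hφx⟩ := φ.exists_norm_lt_one_lt_apply
      (r := ‖φ‖ - min δ (1 / (n + 1))) (by linarith [lt_min hδ hn])
    exact ⟨x, hx.le, by linarith [min_le_right δ (1 / ((n : ℝ) + 1))],
      hclose x hx.le (by linarith [min_le_left δ (1 / ((n : ℝ) + 1))])⟩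
  choose xs hxs_norm hxs_apply hxs_close using hex
  have hlim : Tendsto (fun n => inclusionInDoubleDual ℝ Y (xs n)) atTop (𝓝 ξ) :=
    (tendsto_iff_norm_sub_tendsto_zero (E := StrongDual ℝ (StrongDual ℝ Y))).2
      (squeeze_zero (fun _ => by positivity) hxs_close tendsto_one_div_add_atTop_nhds_zero_nat)
  have hcauchy : CauchySeq xs :=
    (inclusionInDoubleDualLi ℝ).isometry.isUniformInducing.cauchy_map_iff.1 <| by
      rw [Filter.map_map]; exact hlim.cauchySeq
  obtain ⟨y, hy⟩ := cauchySeq_tendsto_of_complete hcauchy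
  have hy_norm : ‖y‖ ≤ 1 := le_of_tendsto hy.norm (Eventually.of_forall hxs_norm)
  have hφy : ‖φ‖ ≤ φ y := by
    simpa using ge_of_tendsto (((φ.continuous.tendsto y).comp hy).add
      tendsto_one_div_add_atTop_nhds_zero_nat) (Eventually.of_forall hxs_apply)
  have hφy' := le_antisymm (φ.apply_le_norm_of_norm_le_one hy_norm) hφy
  exact ⟨y, φ.norm_eq_one_of_apply_eq_norm hφ hy_norm hφy', hφy'⟩

end DualNorm

section SphereLine

variable {E : Type*} [NormedAddCommGroup E] [NormedSpace ℝ E]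

noncomputable def sphereLine (a b : E) (t : ℝ) : E := (‖a‖ / ‖a + t • b‖) • (a + t • b)

variable {a b : E}

theorem sphereLine_zero (ha : a ≠ 0) : sphereLine a b 0 = a := by
  simp [sphereLine, norm_ne_zero_iff.2 ha]

theorem norm_sphereLine {t : ℝ} (h : a + t • b ≠ 0) : ‖sphereLine a b t‖ = ‖a‖ := by
  rw [sphereLine, norm_smul, Real.norm_eq_abs, abs_div, abs_norm, abs_norm,
    div_mul_cancel₀ _ (norm_ne_zero_iff.2 h)]

theorem eventually_add_smul_ne_zero (ha : a ≠ 0) : ∀ᶠ t in 𝓝 (0 : ℝ), a + t • b ≠ 0 :=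
  (continuous_const.add (continuous_id.smul continuous_const)).continuousAt.eventually_ne
    (by simpa using ha)

theorem differentiableAt_norm_div_norm_add_smul (ha : a ≠ 0) (hd : DifferentiableAt ℝ (‖·‖) a) :
    DifferentiableAt ℝ (fun t : ℝ => ‖a‖ / ‖a + t • b‖) 0 := by
  have hline : DifferentiableAt ℝ (fun t : ℝ => a + t • b) 0 := by fun_prop
  exact (differentiableAt_const _).div
    ((by simpa using hd : DifferentiableAt ℝ (‖·‖) (a + (0 : ℝ) • b)).comp 0 hline)
    (by simpa using ha)

theorem differentiableAt_sphereLine (ha : a ≠ 0) (hd : DifferentiableAt ℝ (‖·‖) a) :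
    DifferentiableAt ℝ (sphereLine a b) 0 :=
  (differentiableAt_norm_div_norm_add_smul ha hd).smul (by fun_prop)

theorem hasDerivAt_apply_sphereLine (ha : a ≠ 0) (hd : DifferentiableAt ℝ (‖·‖) a)
    {L : StrongDual ℝ E} (hL : L a = 0) :
    HasDerivAt (fun t => L (sphereLine a b t)) (L b) 0 := by
  have heq : (fun t => L (sphereLine a b t)) = fun t => ‖a‖ / ‖a + t • b‖ * (t * L b) := by
    funext t
    simp [sphereLine, hL]
  rw [heq]
  refine ((differentiableAt_norm_div_norm_add_smul (b := b) ha hd).hasDerivAt.mul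
    ((hasDerivAt_id' (0 : ℝ)).mul_const (L b))).congr_deriv ?_
  simp [norm_ne_zero_iff.2 ha]

end SphereLine

theorem eq_zero_of_abs_add_le_of_abs_sub_le {w b : ℝ} (h₁ : |w + b| ≤ |w|) (h₂ : |w - b| ≤ |w|) :
    b = 0 := by
  nlinarith [sq_le_sq.2 h₁, sq_le_sq.2 h₂]

theorem eq_zero_of_hasDerivAt_of_abs_le {σ β : ℝ → ℝ} {a b : ℝ} (hσ : HasDerivAt σ a 0)
    (hβ : HasDerivAt β b 0) (hβ0 : β 0 = 0)
    (hle : ∀ᶠ t in 𝓝 0, |σ t| ≤ |σ 0| ∧ |σ t + β t| ≤ |σ 0|) : b = 0 := by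
  rcases le_total 0 (σ 0) with hσ0 | hσ0
  · have h₁ : IsLocalMax σ 0 := hle.mono fun t ht => by
      linarith [le_abs_self (σ t), abs_of_nonneg hσ0, ht.1]
    have h₂ : IsLocalMax (fun t => σ t + β t) 0 := hle.mono fun t ht => by
      linarith [le_abs_self (σ t + β t), abs_of_nonneg hσ0, ht.2]
    linarith [h₁.hasDerivAt_eq_zero hσ, h₂.hasDerivAt_eq_zero (hσ.add hβ)]
  · have h₁ : IsLocalMin σ 0 := hle.mono fun t ht => by
      linarith [neg_abs_le (σ t), abs_of_nonpos hσ0, ht.1]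
    have h₂ : IsLocalMin (fun t => σ t + β t) 0 := hle.mono fun t ht => by
      linarith [neg_abs_le (σ t + β t), abs_of_nonpos hσ0, ht.2]
    linarith [h₁.hasDerivAt_eq_zero hσ, h₂.hasDerivAt_eq_zero (hσ.add hβ)]

theorem AttainsNumRadius.isGreatest {X : Type*} [NormedAddCommGroup X] [NormedSpace ℝ X]
    {T : X →L[ℝ] X} (hT : AttainsNumRadius T) :
    IsGreatest {r : ℝ | ∃ (x : X) (f : StrongDual ℝ X),
      ‖x‖ = 1 ∧ ‖f‖ = 1 ∧ f x = 1 ∧ r = |f (T x)|} (numRadius T) := by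
  obtain ⟨x, f, hx, hf, hfx, hmax⟩ := hT
  refine ⟨⟨x, f, hx, hf, hfx, hmax.symm⟩, fun r hr => le_csSup ⟨‖T‖, ?_⟩ hr⟩
  rintro _ ⟨x, f, hx, hf, -, rfl⟩
  simpa [hx, hf] using (f.le_opNorm (T x)).trans
    (mul_le_mul_of_nonneg_left (T.le_opNorm x) (norm_nonneg f))

section SupSum

variable {Y Z : Type*} [NormedAddCommGroup Y] [NormedSpace ℝ Y]
  [NormedAddCommGroup Z] [NormedSpace ℝ Z]

theorem ContinuousLinearMap.norm_coprod (g : StrongDual ℝ Y) (h : StrongDual ℝ Z) :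
    ‖g.coprod h‖ = ‖g‖ + ‖h‖ := by
  refine le_antisymm (opNorm_le_bound _ (by positivity) fun p => ?_)
    (le_of_forall_pos_le_add fun ε hε => ?_)
  · rw [coprod_apply, Real.norm_eq_abs, add_mul]
    calc |g p.1 + h p.2| ≤ ‖g‖ * ‖p.1‖ + ‖h‖ * ‖p.2‖ :=
          (abs_add_le _ _).trans (add_le_add (g.le_opNorm _) (h.le_opNorm _))
      _ ≤ ‖g‖ * ‖p‖ + ‖h‖ * ‖p‖ := by gcongr; exacts [_root_.norm_fst_le p, _root_.norm_snd_le p]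
  · obtain ⟨y, hy, hgy⟩ := g.exists_norm_lt_one_lt_apply (sub_lt_self ‖g‖ (half_pos hε))
    obtain ⟨z, hz, hhz⟩ := h.exists_norm_lt_one_lt_apply (sub_lt_self ‖h‖ (half_pos hε))
    have := (g.coprod h).apply_le_norm_of_norm_le_one (x := (y, z))
      (norm_prod_le_iff.2 ⟨hy.le, hz.le⟩)
    rw [coprod_apply] at this
    linarith

/-- The values `|f (T x)|`, `(x, f) ∈ Π(Y ⊕∞ Z)`, of `T (y, z) = (A y + B z, 0)`, written with
`x = (y, z)` and `f = (g, h)`. -/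
def numericalValues (A : Y →L[ℝ] Y) (B : Z →L[ℝ] Y) : Set ℝ :=
  {r | ∃ (y : Y) (z : Z) (g : StrongDual ℝ Y) (h : StrongDual ℝ Z),
    max ‖y‖ ‖z‖ = 1 ∧ ‖g‖ + ‖h‖ = 1 ∧ g y + h z = 1 ∧ r = |g (A y + B z)|}

theorem setOf_abs_apply_eq_numericalValues (A : Y →L[ℝ] Y) (B : Z →L[ℝ] Y)
    {T : WithLp ∞ (Y × Z) →L[ℝ] WithLp ∞ (Y × Z)}
    (hT : ∀ (y : Y) (z : Z),
      T ((WithLp.prodContinuousLinearEquiv ∞ ℝ Y Z).symm (y, z)) =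
        (WithLp.prodContinuousLinearEquiv ∞ ℝ Y Z).symm (A y + B z, 0)) :
    {r : ℝ | ∃ (x : WithLp ∞ (Y × Z)) (f : StrongDual ℝ (WithLp ∞ (Y × Z))),
      ‖x‖ = 1 ∧ ‖f‖ = 1 ∧ f x = 1 ∧ r = |f (T x)|} = numericalValues A B := by
  let e : WithLp ∞ (Y × Z) ≃ₗᵢ[ℝ] Y × Z := WithLp.prodEquivₗᵢ
  have hTe (p : Y × Z) : T (e.symm p) = e.symm (A p.1 + B p.2, 0) := hT p.1 p.2
  ext r
  constructor
  · rintro ⟨x, f, hx, hf, hfx, rfl⟩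
    let F := f.comp (e.symm : Y × Z →L[ℝ] WithLp ∞ (Y × Z))
    have hF (p : Y × Z) : f (e.symm p) = F.comp (.inl ℝ Y Z) p.1 + F.comp (.inr ℝ Y Z) p.2 :=
      (F.comp_inl_add_comp_inr p).symm
    refine ⟨(e x).1, (e x).2, F.comp (.inl ℝ Y Z), F.comp (.inr ℝ Y Z), ?_, ?_, ?_, ?_⟩
    · rw [← hx, ← e.norm_map x]; rfl
    · rw [← ContinuousLinearMap.norm_coprod, ContinuousLinearMap.coprod_comp_inl_inr,
        ContinuousLinearMap.opNorm_comp_linearIsometryEquiv, hf]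
    · rw [← hF, e.symm_apply_apply, hfx]
    · have hTx : T x = e.symm (A (e x).1 + B (e x).2, 0) := by
        rw [← hTe, e.symm_apply_apply]
      rw [hTx, hF, map_zero, add_zero]
  · rintro ⟨y, z, g, h, hyz, hgh, hsum, rfl⟩
    refine ⟨e.symm (y, z), (g.coprod h).comp (e : WithLp ∞ (Y × Z) →L[ℝ] Y × Z),
      ?_, ?_, ?_, ?_⟩
    · rw [e.symm.norm_map]; exact hyz
    · rw [ContinuousLinearMap.opNorm_comp_linearIsometryEquiv, ContinuousLinearMap.norm_coprod,
        hgh]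
    · simpa using hsum
    · rw [hTe]
      simp

end SupSum

section Core

variable {Y Z : Type*} [NormedAddCommGroup Y] [NormedSpace ℝ Y]
  [NormedAddCommGroup Z] [NormedSpace ℝ Z] {A : Y →L[ℝ] Y} {B : Z →L[ℝ] Y}

theorem ContinuousLinearMap.eq_zero_of_forall_norm_le_apply_eq_zero {r : ℝ} (hr : 0 < r)
    (hB : ∀ z : Z, ‖z‖ ≤ r → B z = 0) : B = 0 := by
  have hker : LinearMap.ker (B : Z →ₗ[ℝ] Y) = ⊤ :=
    Submodule.eq_top_of_nonempty_interior' _ ⟨0, mem_interior.2 ⟨Metric.ball 0 r,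
      fun z hz => hB z (mem_ball_zero_iff.1 hz).le, Metric.isOpen_ball, Metric.mem_ball_self hr⟩⟩
  exact coe_injective (LinearMap.ker_eq_top.1 hker)

theorem abs_apply_mem_numericalValues (A : Y →L[ℝ] Y) (B : Z →L[ℝ] Y) {y : Y} {z : Z}
    {g : StrongDual ℝ Y} {h : StrongDual ℝ Z} (hy : ‖y‖ = 1) (hz : ‖z‖ ≤ 1)
    (hgh : ‖g‖ + ‖h‖ = 1) (hgy : g y = ‖g‖) (hhz : h z = ‖h‖) :
    |g (A y + B z)| ∈ numericalValues A B :=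
  ⟨y, z, g, h, by rw [hy, max_eq_left (hy ▸ hz)], hgh, by rw [hgy, hhz, hgh], rfl⟩

theorem apply_eq_norm_of_add_eq_one {y : Y} {z : Z} {g : StrongDual ℝ Y} {h : StrongDual ℝ Z}
    (hyz : max ‖y‖ ‖z‖ = 1) (hgh : ‖g‖ + ‖h‖ = 1) (hsum : g y + h z = 1) :
    g y = ‖g‖ ∧ h z = ‖h‖ := by
  have hgy := g.apply_le_norm_of_norm_le_one (hyz ▸ le_max_left ‖y‖ ‖z‖)
  have hhz := h.apply_le_norm_of_norm_le_one (hyz ▸ le_max_right ‖y‖ ‖z‖)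
  constructor <;> linarith

theorem apply_eq_zero_of_mem_flatDirections {h : StrongDual ℝ Z} {z₀ z : Z}
    (hhz₀ : h z₀ = ‖h‖) (hz : z ∈ FlatDirections z₀) : h z = 0 := by
  have h₁ := h.apply_le_norm_of_norm_le_one hz.1
  have h₂ := h.apply_le_norm_of_norm_le_one hz.2
  rw [map_add] at h₁
  rw [map_sub] at h₂
  linarith

theorem eq_zero_of_zero_mem_upperBounds (hB : 0 ∈ upperBounds (numericalValues A B)) : B = 0 := by
  refine B.eq_zero_of_forall_norm_le_apply_eq_zero one_pos fun z hz => ?_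
  by_contra hBz
  obtain ⟨ψ, hψ, hψBz⟩ := exists_dual_vector ℝ (B z) (norm_ne_zero_iff.2 hBz)
  rw [RCLike.ofReal_real_eq_id, id] at hψBz
  have hy : ‖‖B z‖⁻¹ • B z‖ = 1 := norm_smul_inv_norm hBz
  have hψy : ψ (‖B z‖⁻¹ • B z) = ‖ψ‖ := by
    simp [hψBz, hψ, norm_ne_zero_iff.2 hBz]
  have hval (z' : Z) (hz' : ‖z'‖ ≤ 1) : ψ (A (‖B z‖⁻¹ • B z) + B z') = 0 :=
    abs_nonpos_iff.1 <| hB <| abs_apply_mem_numericalValues A B hy hz' (h := 0)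
      (by simp [hψ]) hψy (by simp)
  have h₁ := hval z hz
  have h₂ := hval 0 (by simp)
  rw [map_add, hψBz] at h₁
  simp only [map_zero, add_zero] at h₂
  exact hBz (norm_eq_zero.1 (by linarith))

variable [CompleteSpace Y]

theorem abs_fderiv_norm_comp_add_le {v : ℝ} (hv : v ∈ upperBounds (numericalValues A B))
    {φ : StrongDual ℝ Y} {h : StrongDual ℝ Z} {z : Z} (hφ : φ ≠ 0)
    (hd : DifferentiableAt ℝ (‖·‖) φ) (hφh : ‖φ‖ + ‖h‖ = 1) (hz : ‖z‖ ≤ 1) (hhz : h z = ‖h‖) :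
    |fderiv ℝ (‖·‖) φ (φ.comp A) + φ (B z)| ≤ v := by
  obtain ⟨y, hy, hφy⟩ := hd.hasFDerivAt.exists_norm_eq_one_apply_eq_norm hφ
  rw [hd.hasFDerivAt.dual_norm_apply_eq hy.le hφy, ContinuousLinearMap.comp_apply, ← map_add]
  exact hv (abs_apply_mem_numericalValues A B hy hz hφh hφy hhz)

theorem map_eq_zero_of_norm_add_le_one
    (hsmooth : ContDiffOn ℝ 2 (fun f : StrongDual ℝ Y => ‖f‖) {0}ᶜ) {v : ℝ}
    (hv : v ∈ upperBounds (numericalValues A B)) {g : StrongDual ℝ Y} {h : StrongDual ℝ Z}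
    {y₀ : Y} {z₀ z : Z} (hg : g ≠ 0) (hgh : ‖g‖ + ‖h‖ = 1) (hy₀ : ‖y₀‖ ≤ 1)
    (hgy₀ : g y₀ = ‖g‖) (hz₀ : ‖z₀‖ ≤ 1) (hhz₀ : h z₀ = ‖h‖) (hw : |g (A y₀ + B z₀)| = v)
    (hz : ‖z₀ + z‖ ≤ 1) (hhz : h z = 0) (hgBz : g (B z) = 0) : B z = 0 := by
  have hdiff (φ : StrongDual ℝ Y) (hφ : φ ≠ 0) : DifferentiableAt ℝ (‖·‖) φ :=
    (hsmooth.contDiffAt (isOpen_compl_singleton.mem_nhds hφ)).differentiableAt two_ne_zero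
  refine SeparatingDual.eq_zero_of_forall_dual_eq_zero (R := ℝ) fun k => ?_
  let c := sphereLine g k
  -- `σ t = c t (A y + B z₀)` for every norming point `y` of `c t`; written through the derivative
  -- of the norm, it is differentiable because the norm is `C²`.
  let σ t := fderiv ℝ (‖·‖) (c t) ((c t).comp A) + c t (B z₀)
  have hc0 : c 0 = g := sphereLine_zero hg
  have hσ0 : |σ 0| = v := by
    simp only [σ, hc0]
    rwa [(hdiff g hg).hasFDerivAt.dual_norm_apply_eq hy₀ hgy₀, ContinuousLinearMap.comp_apply,
      ← map_add]
  have hbound : ∀ᶠ t in 𝓝 0, |σ t| ≤ |σ 0| ∧ |σ t + c t (B z)| ≤ |σ 0| := by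
    filter_upwards [eventually_add_smul_ne_zero (b := k) hg] with t ht
    have hct : ‖c t‖ = ‖g‖ := norm_sphereLine ht
    have hct0 : c t ≠ 0 := norm_ne_zero_iff.1 (hct ▸ norm_ne_zero_iff.2 hg)
    rw [hσ0]
    refine ⟨abs_fderiv_norm_comp_add_le hv hct0 (hdiff _ hct0) (hct ▸ hgh) hz₀ hhz₀, ?_⟩
    have := abs_fderiv_norm_comp_add_le hv hct0 (hdiff _ hct0) (hct ▸ hgh) hz
      (by rw [map_add, hhz, add_zero, hhz₀])
    rwa [map_add, map_add, ← add_assoc] at this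
  have hcd : DifferentiableAt ℝ c 0 := differentiableAt_sphereLine hg (hdiff g hg)
  have hD : DifferentiableAt ℝ (fderiv ℝ (‖·‖)) (c 0) := by
    rw [hc0]
    exact ((hsmooth.contDiffAt (isOpen_compl_singleton.mem_nhds hg)).fderiv_right (m := 1)
      (by norm_num)).differentiableAt one_ne_zero
  have hσ : DifferentiableAt ℝ σ 0 :=
    ((hD.comp 0 hcd).clm_apply (hcd.clm_comp (differentiableAt_const A))).add
      (hcd.clm_apply (differentiableAt_const _))
  exact eq_zero_of_hasDerivAt_of_abs_le hσ.hasDerivAt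
    (hasDerivAt_apply_sphereLine hg (hdiff g hg) (L := ContinuousLinearMap.apply ℝ ℝ (B z)) hgBz)
    (by simp [c, hc0, hgBz]) hbound

theorem map_eq_zero_of_mem_flatDirections_s8
    (hsmooth : ContDiffOn ℝ 2 (fun f : StrongDual ℝ Y => ‖f‖) {0}ᶜ) {v : ℝ}
    (hv : v ∈ upperBounds (numericalValues A B)) {g : StrongDual ℝ Y} {h : StrongDual ℝ Z}
    {y₀ : Y} {z₀ z : Z} (hg : g ≠ 0) (hgh : ‖g‖ + ‖h‖ = 1) (hy₀ : ‖y₀‖ ≤ 1)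
    (hgy₀ : g y₀ = ‖g‖) (hz₀ : ‖z₀‖ ≤ 1) (hhz₀ : h z₀ = ‖h‖) (hw : |g (A y₀ + B z₀)| = v)
    (hz : z ∈ FlatDirections z₀) : B z = 0 := by
  have hhz := apply_eq_zero_of_mem_flatDirections hhz₀ hz
  have hval (z' : Z) (hz' : ‖z'‖ ≤ 1) (hhz' : h z' = ‖h‖) :
      |g (A y₀ + B z')| ≤ |g (A y₀ + B z₀)| :=
    hw ▸ hv (abs_apply_mem_numericalValues A B (g.norm_eq_one_of_apply_eq_norm hg hy₀ hgy₀)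
      hz' hgh hgy₀ hhz')
  have hgBz : g (B z) = 0 := by
    refine eq_zero_of_abs_add_le_of_abs_sub_le (w := g (A y₀ + B z₀)) ?_ ?_
    · simpa [add_assoc] using hval _ hz.1 (by rw [map_add, hhz, add_zero, hhz₀])
    · simpa [add_sub_assoc] using hval _ hz.2 (by rw [map_sub, hhz, sub_zero, hhz₀])
  exact map_eq_zero_of_norm_add_le_one hsmooth hv hg hgh hy₀ hgy₀ hz₀ hhz₀ hw hz.1 hhz hgBz

theorem finiteDimensional_range_of_isGreatest
    (hsmooth : ContDiffOn ℝ 2 (fun f : StrongDual ℝ Y => ‖f‖) {0}ᶜ) (hZ : StronglyFlat Z)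
    {v : ℝ} (hv : IsGreatest (numericalValues A B) v) :
    FiniteDimensional ℝ (LinearMap.range (B : Z →ₗ[ℝ] Y)) := by
  obtain ⟨⟨y₀, z₀, g, h, hyz, hgh, hsum, rfl⟩, hub⟩ := hv
  obtain ⟨hgy₀, hhz₀⟩ := apply_eq_norm_of_add_eq_one hyz hgh hsum
  have hz₀ : ‖z₀‖ ≤ 1 := hyz ▸ le_max_right _ _
  rcases eq_or_ne g 0 with rfl | hg
  · rw [eq_zero_of_zero_mem_upperBounds (B := B) (by simpa using hub),
      ContinuousLinearMap.toLinearMap_zero, LinearMap.range_zero]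
    infer_instance
  have hflat (z : Z) (hz : z ∈ FlatDirections z₀) : B z = 0 :=
    map_eq_zero_of_mem_flatDirections_s8 hsmooth hub hg hgh (hyz ▸ le_max_left _ _) hgy₀ hz₀ hhz₀
      rfl hz
  rcases hz₀.lt_or_eq with hlt | heq
  · have hball (z : Z) (hz : ‖z‖ ≤ 1 - ‖z₀‖) : B z = 0 :=
      hflat z ⟨(norm_add_le _ _).trans (by linarith), (norm_sub_le _ _).trans (by linarith)⟩
    rw [B.eq_zero_of_forall_norm_le_apply_eq_zero (sub_pos.2 hlt) hball,
      ContinuousLinearMap.toLinearMap_zero, LinearMap.range_zero]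
    infer_instance
  · have := hZ z₀ heq
    have hW : (Submodule.span ℝ (FlatDirections z₀)).topologicalClosure ≤
        LinearMap.ker (B : Z →ₗ[ℝ] Y) :=
      Submodule.topologicalClosure_minimal _ (Submodule.span_le.2 hflat) B.isClosed_ker
    rw [← Submodule.range_liftQ _ _ hW]
    infer_instance

end Core

theorem finiteRank_of_attainsNumRadius_general
    {Y : Type*} [NormedAddCommGroup Y] [NormedSpace ℝ Y] [CompleteSpace Y]
    {Z : Type*} [NormedAddCommGroup Z] [NormedSpace ℝ Z]
    (hsmooth : ContDiffOn ℝ 2 (fun f : Y →L[ℝ] ℝ => ‖f‖) {0}ᶜ)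
    (hZ : StronglyFlat Z)
    (A : Y →L[ℝ] Y) (B : Z →L[ℝ] Y)
    (T : WithLp ∞ (Y × Z) →L[ℝ] WithLp ∞ (Y × Z))
    (hT : ∀ (y : Y) (z : Z),
      T ((WithLp.prodContinuousLinearEquiv ∞ ℝ Y Z).symm (y, z)) =
        (WithLp.prodContinuousLinearEquiv ∞ ℝ Y Z).symm (A y + B z, 0))
    (hattain : AttainsNumRadius T) :
    FiniteDimensional ℝ (LinearMap.range (B : Z →ₗ[ℝ] Y)) := by
  refine finiteDimensional_range_of_isGreatest hsmooth hZ (A := A) (v := numRadius T) ?_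
  rw [← setOf_abs_apply_eq_numericalValues A B hT]
  exact hattain.isGreatest

/-- Let `Y` have a dual norm which is `C²`-smooth away from the origin and let `Z` be
strongly flat. If the operator `T(y,z) = (A y + B z, 0)` on `X = Y ⊕∞ Z` attains its
numerical radius, then `B` has finite rank. -/
theorem finiteRank_of_attainsNumRadius
    {Y : Type*} [NormedAddCommGroup Y] [NormedSpace ℝ Y] [CompleteSpace Y]
    {Z : Type*} [NormedAddCommGroup Z] [NormedSpace ℝ Z] [CompleteSpace Z]
    (hsmooth : ContDiffOn ℝ 2 (fun f : Y →L[ℝ] ℝ => ‖f‖) {0}ᶜ)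
    (hZ : StronglyFlat Z)
    (A : Y →L[ℝ] Y) (B : Z →L[ℝ] Y)
    (T : WithLp ∞ (Y × Z) →L[ℝ] WithLp ∞ (Y × Z))
    (hT : ∀ (y : Y) (z : Z),
      T ((WithLp.prodContinuousLinearEquiv ∞ ℝ Y Z).symm (y, z)) =
        (WithLp.prodContinuousLinearEquiv ∞ ℝ Y Z).symm (A y + B z, 0))
    (hattain : AttainsNumRadius T) :
    FiniteDimensional ℝ (LinearMap.range (B : Z →ₗ[ℝ] Y)) :=
  finiteRank_of_attainsNumRadius_general hsmooth hZ A B T hT hattain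
end

section
/- Let Y and Z be real Banach spaces with Y nonzero, let S : Z → Y be a bounded linear operator, and define the bounded linear operator T on X = Y ⊕∞ Z by T(y, z) = (S z, 0). Then v(T) = ‖S‖. -/
open scoped ENNReal

/-
Always `v(T) ≤ ‖T‖`, and here `‖T‖ ≤ ‖S‖`. Conversely, for a unit vector `z` with `S z ≠ 0`, let
`u` be the normalisation of `S z` and `g` a norming functional of `S z`. Because the norm of the
sum is the `max` norm, `(u, z)` is a unit vector normed by `g ∘ fst`, and
`(g ∘ fst) (T (u, z)) = g (S z) = ‖S z‖`, so `v(T) ≥ ‖S z‖`.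
-/

section NumRadius

variable {X : Type*} [NormedAddCommGroup X] [NormedSpace ℝ X] (T : X →L[ℝ] X)

lemma abs_apply_le_norm_of_norm_eq_one {x : X} {f : X →L[ℝ] ℝ} (hx : ‖x‖ = 1) (hf : ‖f‖ = 1) :
    |f (T x)| ≤ ‖T‖ :=
  calc |f (T x)| ≤ ‖f‖ * ‖T x‖ := f.le_opNorm _
    _ ≤ ‖T‖ := by simpa [hf, hx] using T.le_opNorm x

lemma numRadius_le_norm : numRadius T ≤ ‖T‖ :=
  Real.sSup_le (by rintro _ ⟨x, f, hx, hf, -, rfl⟩; exact abs_apply_le_norm_of_norm_eq_one T hx hf)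
    (norm_nonneg T)

lemma numRadius_nonneg : 0 ≤ numRadius T :=
  Real.sSup_nonneg (by rintro _ ⟨x, f, -, -, -, rfl⟩; exact abs_nonneg _)

lemma abs_apply_le_numRadius {x : X} {f : X →L[ℝ] ℝ} (hx : ‖x‖ = 1) (hf : ‖f‖ = 1)
    (hfx : f x = 1) : |f (T x)| ≤ numRadius T :=
  le_csSup ⟨‖T‖, by rintro _ ⟨x, f, hx, hf, -, rfl⟩; exact abs_apply_le_norm_of_norm_eq_one T hx hf⟩
    ⟨x, f, hx, hf, hfx, rfl⟩

end NumRadius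

section ProdLinfty

variable {Y : Type*} [NormedAddCommGroup Y] [NormedSpace ℝ Y]
  {Z : Type*} [NormedAddCommGroup Z] [NormedSpace ℝ Z]
  {S : Z →L[ℝ] Y} {T : WithLp ∞ (Y × Z) →L[ℝ] WithLp ∞ (Y × Z)}

lemma opNorm_le_of_apply_toLp_eq (hT : ∀ (y : Y) (z : Z),
      T ((WithLp.prodContinuousLinearEquiv ∞ ℝ Y Z).symm (y, z)) =
        (WithLp.prodContinuousLinearEquiv ∞ ℝ Y Z).symm (S z, 0)) :
    ‖T‖ ≤ ‖S‖ := by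
  refine T.opNorm_le_bound (norm_nonneg S) fun w => ?_
  have hTw : T w = WithLp.toLp ∞ (S w.snd, 0) := hT w.fst w.snd
  calc ‖T w‖ = ‖S w.snd‖ := by simp [hTw]
    _ ≤ ‖S‖ * ‖w.snd‖ := S.le_opNorm _
    _ ≤ ‖S‖ * ‖w‖ := by gcongr; exact WithLp.norm_snd_le (x := w)

lemma abs_apply_le_numRadius_of_apply_toLp_eq (hT : ∀ (y : Y) (z : Z),
      T ((WithLp.prodContinuousLinearEquiv ∞ ℝ Y Z).symm (y, z)) =
        (WithLp.prodContinuousLinearEquiv ∞ ℝ Y Z).symm (S z, 0))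
    {u : Y} {z : Z} {g : Y →L[ℝ] ℝ} (hu : ‖u‖ = 1) (hz : ‖z‖ ≤ 1) (hg : ‖g‖ = 1)
    (hgu : g u = 1) : |g (S z)| ≤ numRadius T := by
  set f := g.comp (WithLp.fstL ∞ ℝ Y Z)
  have hx : ‖WithLp.toLp ∞ (u, z)‖ = 1 := by simp [Prod.norm_def, hu, hz]
  have hfx : f (WithLp.toLp ∞ (u, z)) = 1 := by simpa [f] using hgu
  have hf : ‖f‖ = 1 := by
    refine le_antisymm ?_ (by simpa [hx, hfx] using f.le_opNorm (WithLp.toLp ∞ (u, z)))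
    calc ‖f‖ ≤ ‖g‖ * ‖WithLp.fstL ∞ ℝ Y Z‖ := g.opNorm_comp_le _
      _ ≤ 1 * 1 := by
        rw [hg]
        gcongr
        exact (WithLp.fstL ∞ ℝ Y Z).opNorm_le_bound zero_le_one
          fun w => by simpa using WithLp.norm_fst_le (x := w)
      _ = 1 := one_mul 1
  have hTx : T (WithLp.toLp ∞ (u, z)) = WithLp.toLp ∞ (S z, 0) := by simpa using hT u z
  simpa [f, hTx] using abs_apply_le_numRadius T hx hf hfx

lemma norm_apply_le_numRadius_of_apply_toLp_eq (hT : ∀ (y : Y) (z : Z),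
      T ((WithLp.prodContinuousLinearEquiv ∞ ℝ Y Z).symm (y, z)) =
        (WithLp.prodContinuousLinearEquiv ∞ ℝ Y Z).symm (S z, 0))
    {z : Z} (hz : ‖z‖ ≤ 1) : ‖S z‖ ≤ numRadius T := by
  by_cases hSz : S z = 0
  · simpa [hSz] using numRadius_nonneg T
  obtain ⟨g, hg, hgSz⟩ := exists_dual_vector ℝ (S z) (norm_ne_zero_iff.mpr hSz)
  have hgu : g ((‖S z‖⁻¹ : ℝ) • S z) = 1 := by
    simp [hgSz, inv_mul_cancel₀ (norm_ne_zero_iff.mpr hSz)]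
  simpa [hgSz] using
    abs_apply_le_numRadius_of_apply_toLp_eq hT (norm_smul_inv_norm hSz) hz hg hgu

end ProdLinfty

theorem numRadius_eq_norm_of_prodLinfty_general
    {Y : Type*} [NormedAddCommGroup Y] [NormedSpace ℝ Y]
    {Z : Type*} [NormedAddCommGroup Z] [NormedSpace ℝ Z]
    (S : Z →L[ℝ] Y)
    (T : WithLp ∞ (Y × Z) →L[ℝ] WithLp ∞ (Y × Z))
    (hT : ∀ (y : Y) (z : Z),
      T ((WithLp.prodContinuousLinearEquiv ∞ ℝ Y Z).symm (y, z)) =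
        (WithLp.prodContinuousLinearEquiv ∞ ℝ Y Z).symm (S z, 0)) :
    numRadius T = ‖S‖ :=
  le_antisymm ((numRadius_le_norm T).trans (opNorm_le_of_apply_toLp_eq hT))
    (S.opNorm_le_of_unit_norm (numRadius_nonneg T)
      fun _ hz => norm_apply_le_numRadius_of_apply_toLp_eq hT hz.le)

/-- Let `Y` be nonzero and `S : Z → Y` a bounded linear operator. The operator
`T(y,z) = (S z, 0)` on `X = Y ⊕∞ Z` satisfies `v(T) = ‖S‖`. -/
theorem numRadius_eq_norm_of_prodLinfty
    {Y : Type*} [NormedAddCommGroup Y] [NormedSpace ℝ Y] [CompleteSpace Y] [Nontrivial Y]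
    {Z : Type*} [NormedAddCommGroup Z] [NormedSpace ℝ Z] [CompleteSpace Z]
    (S : Z →L[ℝ] Y)
    (T : WithLp ∞ (Y × Z) →L[ℝ] WithLp ∞ (Y × Z))
    (hT : ∀ (y : Y) (z : Z),
      T ((WithLp.prodContinuousLinearEquiv ∞ ℝ Y Z).symm (y, z)) =
        (WithLp.prodContinuousLinearEquiv ∞ ℝ Y Z).symm (S z, 0)) :
    numRadius T = ‖S‖ :=
  numRadius_eq_norm_of_prodLinfty_general S T hT
end

section
/- Let X be a real Banach space with property α. Then NRA(X) ∩ K(X) is dense in K(X) with respect to the operator norm. -/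
universe u

/-- A real Banach space `X` has property α. -/
def PropertyAlpha (X : Type u) [NormedAddCommGroup X] [NormedSpace ℝ X] : Prop :=
  ∃ (ι : Type u) (x : ι → X) (xstar : ι → (X →L[ℝ] ℝ)) (ρ : ℝ),
    0 ≤ ρ ∧ ρ < 1 ∧
    (∀ i, ‖x i‖ = 1) ∧ (∀ i, ‖xstar i‖ = 1) ∧
    (∀ i, xstar i (x i) = 1) ∧
    (∀ i j, i ≠ j → |xstar i (x j)| ≤ ρ) ∧
    Metric.closedBall (0 : X) 1 =
      closure (convexHull ℝ (Set.range x ∪ -(Set.range x)))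

/-!
Let `(x i, xstar i)` witness property α with constant `ρ`, and let `W` bound `|f (R (x j))|`
over every face `{f | ‖f‖ ≤ 1, f (x j) = 1}`. Testing `R` against
`(1 - ρ) • f + (1 - f (x j)) • xstar j`, a multiple of an element of that face, gives
`(1 - ρ) * |f (R (x j))| ≤ (1 - ρ) * W + 2 * ‖R‖ * (1 - f (x j))` for all `f` in the dual ball.
This inequality is convex and closed in the point, so it extends from `± x j` to the unit ball, and
at `(u, f) ∈ Π(X)` it says `v(R) ≤ W`: thus `R` attains its numerical radius as soon as the
supremum over the generator faces is attained.

Given `T`, take `x i` and `f₁` in its face nearly realizing that supremum and add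
`± c • xstar i ⊗ x i`. This raises `|f₁ (T (x i))|` by `c` but moves the values at the other
generators by at most `c * ρ`, so the supremum is attained on the face of `x i`, where a
maximizing functional exists by Banach–Alaoglu.
-/

open Metric Set

section Dual

variable {X : Type*} [NormedAddCommGroup X] [NormedSpace ℝ X]

lemma abs_apply_le_norm {f : X →L[ℝ] ℝ} (hf : ‖f‖ ≤ 1) (v : X) : |f v| ≤ ‖v‖ :=
  (f.le_opNorm v).trans (mul_le_of_le_one_left (norm_nonneg v) hf)

lemma abs_apply_apply_le_opNorm {f : X →L[ℝ] ℝ} (hf : ‖f‖ ≤ 1) (R : X →L[ℝ] X) {v : X}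
    (hv : ‖v‖ = 1) : |f (R v)| ≤ ‖R‖ :=
  (abs_apply_le_norm hf _).trans (by simpa [hv] using R.le_opNorm v)

lemma opNorm_le_of_abs_apply_le {s : Set X}
    (hball : closedBall (0 : X) 1 = closure (convexHull ℝ (s ∪ -s)))
    {f : X →L[ℝ] ℝ} {C : ℝ} (hC : 0 ≤ C) (hf : ∀ v ∈ s, |f v| ≤ C) : ‖f‖ ≤ C := by
  have hsub : closedBall (0 : X) 1 ⊆ f ⁻¹' closedBall 0 C := by
    refine hball ▸ closure_minimal (convexHull_min ?_ ((convex_closedBall 0 C).linear_preimage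
      f.toLinearMap)) (isClosed_closedBall.preimage f.continuous)
    rintro v (hv | hv)
    · simpa using hf v hv
    · simpa using hf (-v) hv
  refine f.opNorm_le_of_unit_norm hC fun v hv => ?_
  simpa using hsub (mem_closedBall_zero_iff.mpr hv.le)

lemma convex_setOf_abs_add_le (φ ψ : X →L[ℝ] ℝ) (M : ℝ) :
    Convex ℝ {z | |φ z| + ψ z ≤ M} := by
  simpa using (((convexOn_norm convex_univ).comp_linearMap φ.toLinearMap).add
    (ψ.toLinearMap.convexOn convex_univ)).convex_le M

lemma exists_forall_abs_apply_le_of_mem_face {v : X} (y : X)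
    (hne : ∃ f : X →L[ℝ] ℝ, ‖f‖ ≤ 1 ∧ f v = 1) :
    ∃ f₀ : X →L[ℝ] ℝ, ‖f₀‖ ≤ 1 ∧ f₀ v = 1 ∧
      ∀ f : X →L[ℝ] ℝ, ‖f‖ ≤ 1 → f v = 1 → |f y| ≤ |f₀ y| := by
  set F : Set (WeakDual ℝ X) :=
    WeakDual.toStrongDual ⁻¹' closedBall 0 1 ∩ {φ | φ v = 1}
  have hF : IsCompact F := (WeakDual.isCompact_closedBall 0 1).inter_right
    (isClosed_eq (WeakDual.eval_continuous v) continuous_const)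
  have mem_F {f : X →L[ℝ] ℝ} (h₁ : ‖f‖ ≤ 1) (h₂ : f v = 1) : StrongDual.toWeakDual f ∈ F :=
    ⟨mem_closedBall_zero_iff.mpr h₁, h₂⟩
  obtain ⟨f, h₁, h₂⟩ := hne
  obtain ⟨φ₀, ⟨hφ₀, hφ₀v⟩, hmax⟩ := hF.exists_isMaxOn ⟨_, mem_F h₁ h₂⟩
    (WeakDual.eval_continuous y).abs.continuousOn
  exact ⟨WeakDual.toStrongDual φ₀, mem_closedBall_zero_iff.mp hφ₀, hφ₀v,
    fun f h₁ h₂ => hmax (mem_F h₁ h₂)⟩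

lemma exists_abs_add_mul_eq (a : ℝ) {c : ℝ} (hc : 0 ≤ c) :
    ∃ σ : ℝ, |σ| = 1 ∧ |a + σ * c| = |a| + c := by
  rcases le_or_gt 0 a with ha | ha
  · exact ⟨1, abs_one, by rw [one_mul, abs_of_nonneg ha, abs_of_nonneg (by positivity)]⟩
  · exact ⟨-1, by simp, by rw [abs_of_neg ha, abs_of_neg (by linarith)]; ring⟩

lemma isCompactOperator_smulRight (f : X →L[ℝ] ℝ) (v : X) :
    IsCompactOperator (f.smulRight v) :=
  (isCompactOperator_of_locallyCompactSpace_dom f).continuous_comp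
    (continuous_id.smul continuous_const)

end Dual

structure IsAlphaSystem {X ι : Type*} [NormedAddCommGroup X] [NormedSpace ℝ X]
    (x : ι → X) (xstar : ι → X →L[ℝ] ℝ) (ρ : ℝ) : Prop where
  rho_nonneg : 0 ≤ ρ
  rho_lt_one : ρ < 1
  norm_x : ∀ i, ‖x i‖ = 1
  norm_xstar : ∀ i, ‖xstar i‖ = 1
  xstar_x : ∀ i, xstar i (x i) = 1
  abs_xstar_x_le : ∀ i j, i ≠ j → |xstar i (x j)| ≤ ρ
  closedBall_eq : closedBall (0 : X) 1 = closure (convexHull ℝ (range x ∪ -range x))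

namespace IsAlphaSystem

variable {X ι : Type*} [NormedAddCommGroup X] [NormedSpace ℝ X]
  {x : ι → X} {xstar : ι → X →L[ℝ] ℝ} {ρ : ℝ}

lemma nonempty (hα : IsAlphaSystem x xstar ρ) : Nonempty ι := by
  have h0 : (0 : X) ∈ closure (convexHull ℝ (range x ∪ -range x)) :=
    hα.closedBall_eq ▸ mem_closedBall_self zero_le_one
  rcases isEmpty_or_nonempty ι with hι | hι
  · rw [range_eq_empty, empty_union, neg_empty, convexHull_empty, closure_empty] at h0
    exact absurd h0 (notMem_empty 0)
  · exact hι

lemma abs_apply_generator_le (hα : IsAlphaSystem x xstar ρ) {R : X →L[ℝ] X} {W : ℝ}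
    (hWR : W ≤ ‖R‖)
    (hW : ∀ j (f : X →L[ℝ] ℝ), ‖f‖ ≤ 1 → f (x j) = 1 → |f (R (x j))| ≤ W)
    (j : ι) {f : X →L[ℝ] ℝ} (hf : ‖f‖ ≤ 1) :
    (1 - ρ) * |f (R (x j))| ≤ (1 - ρ) * W + 2 * ‖R‖ * (1 - f (x j)) := by
  have hρ₀ := hα.rho_nonneg
  have hρ₁ := hα.rho_lt_one
  have hfx : ∀ i, |f (x i)| ≤ 1 := fun i => (abs_apply_le_norm hf _).trans_eq (hα.norm_x i)
  set η := 1 - f (x j)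
  have hη : 0 ≤ η := by linarith [(abs_le.mp (hfx j)).2]
  set d := 1 - ρ + ρ * η with hd_def
  have hd : 0 < d := by positivity
  -- `h / d` lies in the face of `x j`, so `W` bounds `|h (R (x j))| / d`.
  set h : X →L[ℝ] ℝ := (1 - ρ) • f + η • xstar j
  have h_apply (z : X) : h z = (1 - ρ) * f z + η * xstar j z := rfl
  have hhx : h (x j) = d := by rw [h_apply, hα.xstar_x]; ring
  have hh : ‖h‖ ≤ d := by
    refine opNorm_le_of_abs_apply_le hα.closedBall_eq hd.le ?_
    rintro _ ⟨i, rfl⟩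
    rcases eq_or_ne i j with rfl | hij
    · rw [hhx, abs_of_pos hd]
    · calc |h (x i)| ≤ (1 - ρ) * |f (x i)| + η * |xstar j (x i)| := by
            rw [h_apply]
            refine (abs_add_le _ _).trans_eq ?_
            rw [abs_mul, abs_mul, abs_of_pos (by linarith), abs_of_nonneg hη]
        _ ≤ (1 - ρ) * 1 + η * ρ :=
            add_le_add (mul_le_mul_of_nonneg_left (hfx i) (by linarith))
              (mul_le_mul_of_nonneg_left (hα.abs_xstar_x_le j i hij.symm) hη)
        _ = d := by ring
  have hhR : |h (R (x j))| ≤ d * W := by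
    have hnorm : ‖d⁻¹ • h‖ ≤ 1 := by
      rw [norm_smul, Real.norm_of_nonneg (inv_nonneg.mpr hd.le), inv_mul_le_iff₀ hd, mul_one]
      exact hh
    have := hW j (d⁻¹ • h) hnorm (by simp [hhx, hd.ne'])
    rwa [smul_apply, smul_eq_mul, abs_mul, abs_inv, abs_of_pos hd,
      inv_mul_le_iff₀ hd] at this
  have hxR : |xstar j (R (x j))| ≤ ‖R‖ :=
    abs_apply_apply_le_opNorm (hα.norm_xstar j).le R (hα.norm_x j)
  calc (1 - ρ) * |f (R (x j))| = |h (R (x j)) - η * xstar j (R (x j))| := by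
        rw [h_apply, add_sub_cancel_right, abs_mul, abs_of_pos (by linarith : (0 : ℝ) < 1 - ρ)]
    _ ≤ d * W + η * ‖R‖ := by
        refine (abs_sub _ _).trans (add_le_add hhR ?_)
        rw [abs_mul, abs_of_nonneg hη]
        gcongr
    _ = (1 - ρ) * W + η * (ρ * W + ‖R‖) := by rw [hd_def]; ring
    _ ≤ (1 - ρ) * W + η * (‖R‖ + ‖R‖) := by
        gcongr
        nlinarith [norm_nonneg R]
    _ = (1 - ρ) * W + 2 * ‖R‖ * η := by ring

lemma abs_apply_le (hα : IsAlphaSystem x xstar ρ) {R : X →L[ℝ] X} {W : ℝ} (hWR : W ≤ ‖R‖)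
    (hW : ∀ j (f : X →L[ℝ] ℝ), ‖f‖ ≤ 1 → f (x j) = 1 → |f (R (x j))| ≤ W)
    {u : X} (hu : ‖u‖ ≤ 1) {g : X →L[ℝ] ℝ} (hg : ‖g‖ ≤ 1) :
    (1 - ρ) * |g (R u)| ≤ (1 - ρ) * W + 2 * ‖R‖ * (1 - g u) := by
  have hρ : 0 < 1 - ρ := by linarith [hα.rho_lt_one]
  -- The inequality cuts out a closed convex set, so it suffices to check it at `± x j`.
  set φ := (1 - ρ) • g.comp R
  set ψ := (2 * ‖R‖) • g
  have key : ∀ z, z ∈ {z | |φ z| + ψ z ≤ (1 - ρ) * W + 2 * ‖R‖} ↔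
      (1 - ρ) * |g (R z)| ≤ (1 - ρ) * W + 2 * ‖R‖ * (1 - g z) := by
    intro z
    simp only [mem_ofPred_eq, φ, ψ, smul_apply, smul_eq_mul,
      ContinuousLinearMap.comp_apply, abs_mul, abs_of_pos hρ]
    constructor <;> intro h <;> linarith
  have hsub : closedBall (0 : X) 1 ⊆ {z | |φ z| + ψ z ≤ (1 - ρ) * W + 2 * ‖R‖} := by
    refine hα.closedBall_eq ▸ closure_minimal (convexHull_min ?_ (convex_setOf_abs_add_le φ ψ _))
      (isClosed_le (φ.continuous.abs.add ψ.continuous) continuous_const)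
    rintro z (⟨j, rfl⟩ | ⟨j, hj⟩)
    · exact (key _).mpr (hα.abs_apply_generator_le hWR hW j hg)
    · obtain rfl : z = -x j := by rw [hj, neg_neg]
      rw [key]
      have := hα.abs_apply_generator_le hWR hW j (f := -g) (by rwa [norm_neg])
      simpa only [map_neg, neg_apply, abs_neg] using this
  exact (key u).mp (hsub (mem_closedBall_zero_iff.mpr hu))

lemma attainsNumRadius_of_forall_le (hα : IsAlphaSystem x xstar ρ) {R : X →L[ℝ] X} {i : ι}
    {f₀ : X →L[ℝ] ℝ} (hf₀ : ‖f₀‖ ≤ 1) (hf₀x : f₀ (x i) = 1)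
    (hmax : ∀ j (f : X →L[ℝ] ℝ), ‖f‖ ≤ 1 → f (x j) = 1 → |f (R (x j))| ≤ |f₀ (R (x i))|) :
    AttainsNumRadius R := by
  have hρ : 0 < 1 - ρ := by linarith [hα.rho_lt_one]
  have hf₀1 : ‖f₀‖ = 1 :=
    le_antisymm hf₀ (by simpa [hf₀x, hα.norm_x i] using f₀.le_opNorm (x i))
  set N := {r : ℝ | ∃ (u : X) (f : X →L[ℝ] ℝ), ‖u‖ = 1 ∧ ‖f‖ = 1 ∧ f u = 1 ∧ r = |f (R u)|}
  have hub : ∀ r ∈ N, r ≤ |f₀ (R (x i))| := by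
    rintro _ ⟨u, g, hu, hg, hgu, rfl⟩
    have := hα.abs_apply_le (abs_apply_apply_le_opNorm hf₀ R (hα.norm_x i)) hmax hu.le hg.le
    rw [hgu, sub_self, mul_zero, add_zero] at this
    exact le_of_mul_le_mul_left this hρ
  have hmem : |f₀ (R (x i))| ∈ N :=
    ⟨x i, f₀, hα.norm_x i, hf₀1, hf₀x, rfl⟩
  exact ⟨x i, f₀, hα.norm_x i, hf₀1, hf₀x,
    le_antisymm (le_csSup ⟨_, hub⟩ hmem) (csSup_le ⟨_, hmem⟩ hub)⟩

lemma abs_apply_add_smulRight_le (hα : IsAlphaSystem x xstar ρ) (T : X →L[ℝ] X) (a : ℝ)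
    {i j : ι} (hij : i ≠ j) {f : X →L[ℝ] ℝ} (hf : ‖f‖ ≤ 1) :
    |f ((T + a • (xstar i).smulRight (x i)) (x j))| ≤ |f (T (x j))| + |a| * ρ := by
  have hfx : |f (x i)| ≤ 1 := (abs_apply_le_norm hf _).trans_eq (hα.norm_x i)
  have hρ := hα.rho_nonneg
  calc |f ((T + a • (xstar i).smulRight (x i)) (x j))|
      = |f (T (x j)) + a * xstar i (x j) * f (x i)| := by
        simp only [add_apply, smul_apply,
          ContinuousLinearMap.smulRight_apply, map_add, map_smul, smul_eq_mul]
        ring_nf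
    _ ≤ |f (T (x j))| + |a| * |xstar i (x j)| * |f (x i)| := by
        rw [← abs_mul, ← abs_mul]; exact abs_add_le _ _
    _ ≤ |f (T (x j))| + |a| * ρ * 1 := by
        gcongr
        exact hα.abs_xstar_x_le i j hij
    _ = |f (T (x j))| + |a| * ρ := by ring

lemma exists_attainsNumRadius_add_smulRight (hα : IsAlphaSystem x xstar ρ) (T : X →L[ℝ] X)
    {c : ℝ} (hc : 0 < c) :
    ∃ i σ, |σ| = 1 ∧ AttainsNumRadius (T + (σ * c) • (xstar i).smulRight (x i)) := by
  obtain ⟨j₀⟩ := hα.nonempty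
  set A := {r | ∃ (j : ι) (f : X →L[ℝ] ℝ), ‖f‖ ≤ 1 ∧ f (x j) = 1 ∧ r = |f (T (x j))|}
  have hA_bdd : BddAbove A := ⟨‖T‖, by
    rintro _ ⟨j, f, hf, -, rfl⟩
    exact abs_apply_apply_le_opNorm hf T (hα.norm_x j)⟩
  have hA_ne : A.Nonempty := ⟨_, j₀, xstar j₀, (hα.norm_xstar j₀).le, hα.xstar_x j₀, rfl⟩
  have hgap : 0 < c * (1 - ρ) := mul_pos hc (by linarith [hα.rho_lt_one])
  obtain ⟨_, ⟨i, f₁, hf₁, hf₁x, rfl⟩, hlt⟩ := exists_lt_of_lt_csSup hA_ne (sub_lt_self _ hgap)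
  obtain ⟨σ, hσ, hσc⟩ := exists_abs_add_mul_eq (f₁ (T (x i))) hc.le
  set S := T + (σ * c) • (xstar i).smulRight (x i)
  have hS_i : |f₁ (S (x i))| = |f₁ (T (x i))| + c := by
    simp only [S, add_apply, smul_apply, ContinuousLinearMap.smulRight_apply,
      hα.xstar_x, one_smul, map_add, map_smul, hf₁x, smul_eq_mul, mul_one, hσc]
  obtain ⟨f₀, hf₀, hf₀x, hmax⟩ :=
    exists_forall_abs_apply_le_of_mem_face (S (x i)) ⟨f₁, hf₁, hf₁x⟩
  refine ⟨i, σ, hσ, hα.attainsNumRadius_of_forall_le hf₀ hf₀x fun j f hf hfx => ?_⟩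
  rcases eq_or_ne i j with rfl | hij
  · exact hmax f hf hfx
  · calc |f (S (x j))| ≤ |f (T (x j))| + |σ * c| * ρ := hα.abs_apply_add_smulRight_le T _ hij hf
      _ ≤ sSup A + c * ρ := by
        rw [abs_mul, hσ, one_mul, abs_of_pos hc]
        exact add_le_add_left (le_csSup hA_bdd ⟨j, f, hf, hfx, rfl⟩) _
      _ ≤ |f₁ (S (x i))| := by rw [hS_i]; linarith
      _ ≤ |f₀ (S (x i))| := hmax f₁ hf₁ hf₁x

end IsAlphaSystem

theorem NRA_compact_dense_of_propertyAlpha_general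
    {X : Type u} [NormedAddCommGroup X] [NormedSpace ℝ X]
    (h : PropertyAlpha X) :
    ∀ T : X →L[ℝ] X, IsCompactOperator T →
      T ∈ closure {S : X →L[ℝ] X | AttainsNumRadius S ∧ IsCompactOperator S} := by
  obtain ⟨ι, x, xstar, ρ, hρ₀, hρ₁, hx, hxs, hxx, hij, hball⟩ := h
  have hα : IsAlphaSystem x xstar ρ := ⟨hρ₀, hρ₁, hx, hxs, hxx, hij, hball⟩
  intro T hT
  refine Metric.mem_closure_iff.mpr fun ε hε => ?_
  obtain ⟨i, σ, hσ, hS⟩ := hα.exists_attainsNumRadius_add_smulRight T (half_pos hε)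
  have hS_compact : IsCompactOperator (T + (σ * (ε / 2)) • (xstar i).smulRight (x i)) := by
    rw [FunLike.coe_add, FunLike.coe_smul]
    exact hT.add ((isCompactOperator_smulRight _ _).smul _)
  refine ⟨_, ⟨hS, hS_compact⟩, ?_⟩
  rw [dist_eq_norm, sub_add_cancel_left, norm_neg, norm_smul,
    ContinuousLinearMap.norm_smulRight_apply, hx, hxs, Real.norm_eq_abs, abs_mul, hσ,
    abs_of_pos (half_pos hε)]
  linarith

/-- If `X` has property α, then the numerical radius attaining compact operators are
dense in the compact operators on `X`. -/
theorem NRA_compact_dense_of_propertyAlpha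
    {X : Type u} [NormedAddCommGroup X] [NormedSpace ℝ X] [CompleteSpace X]
    (h : PropertyAlpha X) :
    ∀ T : X →L[ℝ] X, IsCompactOperator T →
      T ∈ closure {S : X →L[ℝ] X | AttainsNumRadius S ∧ IsCompactOperator S} :=
  NRA_compact_dense_of_propertyAlpha_general h
end
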